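/- arXiv:1002.2511 — 5 statements merged into one kernel-verified Lean document; each statement's English description precedes it below -/
import Mathlib

section
/- Strong additivity of the geometric measure for non-negative states: let ρ be an N-partite density matrix on ⊗_{j=1}^N ℂ^{d_j} all of whose matrix entries in the computational product basis are non-negative real numbers, and let σ be an arbitrary N-partite density matrix on ⊗_{j=1}^N ℂ^{d'_j}. Then Λ²(ρ ⊗ σ) = Λ²(ρ) · Λ²(σ), where ρ ⊗ σ is regarded as an N-partite state by grouping the j-th party of ρ with the j-th party of σ; equivalently G(ρ ⊗ σ) = G(ρ) + G(σ). -/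
open scoped BigOperators ComplexOrder

namespace Paper

/-- `a` is an ℓ²-normalized (unit) vector. -/
def IsUnitVec {n : Type*} [Fintype n] (a : n → ℂ) : Prop :=
  ∑ x, ‖a x‖ ^ 2 = 1

/-- A density matrix: positive semidefinite with trace 1. -/
def IsDensityMatrix {n : Type*} [Fintype n] (ρ : Matrix n n ℂ) : Prop :=
  ρ.PosSemidef ∧ ρ.trace = 1

/-- ⟨φ|ρ|φ⟩ (its real part). -/
noncomputable def overlap {n : Type*} [Fintype n] (ρ : Matrix n n ℂ) (φ : n → ℂ) : ℝ :=
  (dotProduct (star φ) (ρ.mulVec φ)).re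

/-- The product vector a_1 ⊗ ⋯ ⊗ a_N. -/
def prodVec {N : ℕ} {ι : Fin N → Type*} (a : ∀ j, ι j → ℂ) : (∀ j, ι j) → ℂ :=
  fun i => ∏ j, a j (i j)

/-- Λ²(ρ): the maximal overlap of ρ with product vectors. -/
noncomputable def maxOverlap {N : ℕ} {ι : Fin N → Type*} [∀ j, Fintype (ι j)]
    (ρ : Matrix (∀ j, ι j) (∀ j, ι j) ℂ) : ℝ :=
  sSup {r : ℝ | ∃ a : ∀ j, ι j → ℂ, (∀ j, IsUnitVec (a j)) ∧ r = overlap ρ (prodVec a)}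

/-- The geometric measure of entanglement G(ρ) = −log₂ Λ²(ρ). -/
noncomputable def gm {N : ℕ} {ι : Fin N → Type*} [∀ j, Fintype (ι j)]
    (ρ : Matrix (∀ j, ι j) (∀ j, ι j) ℂ) : ℝ :=
  -Real.logb 2 (maxOverlap ρ)

/-- ρ has non-negative (real) entries in the computational basis. -/
def IsNonnegMatrix {n : Type*} (ρ : Matrix n n ℂ) : Prop :=
  ∀ i i', 0 ≤ (ρ i i').re ∧ (ρ i i').im = 0

/-- The tensor product ρ ⊗ σ regarded as N-partite by grouping corresponding parties. -/
def tensorGrouped {N : ℕ} {ι κ : Fin N → Type*}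
    (ρ : Matrix (∀ j, ι j) (∀ j, ι j) ℂ) (σ : Matrix (∀ j, κ j) (∀ j, κ j) ℂ) :
    Matrix (∀ j, ι j × κ j) (∀ j, ι j × κ j) ℂ :=
  fun i i' => ρ (fun j => (i j).1) (fun j => (i' j).1) * σ (fun j => (i j).2) (fun j => (i' j).2)

/-- The n-fold tensor power ρ^{⊗n} regarded as N-partite by grouping the n copies of each party. -/
def tensorPow {N : ℕ} {ι : Fin N → Type*}
    (ρ : Matrix (∀ j, ι j) (∀ j, ι j) ℂ) (n : ℕ) :
    Matrix (∀ j, Fin n → ι j) (∀ j, Fin n → ι j) ℂ :=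
  fun i i' => ∏ k, ρ (fun j => i j k) (fun j => i' j k)

-- ==================== auxiliary development ====================

open Matrix Finset Complex

section Single

variable {n : Type*} [Fintype n]

/-- The complex sesquilinear form  ⟨x | σ | y⟩. -/
noncomputable def sF (σ : Matrix n n ℂ) (x y : n → ℂ) : ℂ :=
  dotProduct (star x) (σ.mulVec y)

lemma sF_eq_sum (σ : Matrix n n ℂ) (x y : n → ℂ) :
    sF σ x y = ∑ i, ∑ i', (starRingEnd ℂ) (x i) * σ i i' * y i' := by
  unfold sF dotProduct Matrix.mulVec dotProduct
  refine Finset.sum_congr rfl fun i _ => ?_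
  simp only [Pi.star_apply, dotProduct, Finset.mul_sum]
  refine Finset.sum_congr rfl fun i' _ => ?_
  simp [Complex.star_def, mul_assoc]

lemma overlap_eq_re_sF (σ : Matrix n n ℂ) (φ : n → ℂ) : overlap σ φ = (sF σ φ φ).re := rfl

lemma sF_self_nonneg {σ : Matrix n n ℂ} (hσ : σ.PosSemidef) (φ : n → ℂ) :
    0 ≤ (sF σ φ φ).re ∧ (sF σ φ φ).im = 0 := by
  have h := hσ.dotProduct_mulVec_nonneg φ
  rw [Complex.le_def] at h
  exact ⟨by simpa [sF] using h.1, by simpa [sF] using h.2.symm⟩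

lemma overlap_nonneg {σ : Matrix n n ℂ} (hσ : σ.PosSemidef) (φ : n → ℂ) :
    0 ≤ overlap σ φ := (sF_self_nonneg hσ φ).1

/-- Cauchy–Schwarz for the PSD sesquilinear form. -/
lemma sF_abs_le {σ : Matrix n n ℂ} (hσ : σ.PosSemidef) (x y : n → ℂ) :
    ‖sF σ x y‖ ≤ Real.sqrt (sF σ x x).re * Real.sqrt (sF σ y y).re := by
  obtain ⟨B, rfl⟩ : ∃ B : Matrix n n ℂ, σ = Bᴴ * B := by
    classical
    open scoped MatrixOrder Matrix.Norms.L2Operator in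
    obtain ⟨B, hB⟩ := CStarAlgebra.nonneg_iff_eq_star_mul_self.mp hσ.nonneg
    exact ⟨B, hB⟩
  have key : ∀ u v : n → ℂ, sF (Bᴴ * B) u v = dotProduct (star (B.mulVec u)) (B.mulVec v) := by
    intro u v
    unfold sF
    rw [← Matrix.mulVec_mulVec, dotProduct_mulVec, ← Matrix.star_mulVec]
  rw [key, key, key]
  set u := B.mulVec x
  set v := B.mulVec y
  have hinner := @norm_inner_le_norm ℂ (EuclideanSpace ℂ n) _ _ _
    ((WithLp.equiv 2 _).symm u) ((WithLp.equiv 2 _).symm v)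
  rw [EuclideanSpace.inner_toLp_toLp, dotProduct_comm] at hinner
  have hnorm : ∀ w : n → ℂ, ‖(WithLp.equiv 2 (n → ℂ)).symm w‖
      = Real.sqrt (dotProduct (star w) w).re := by
    intro w
    rw [EuclideanSpace.norm_eq]
    congr 1
    unfold dotProduct
    rw [Complex.re_sum]
    refine Finset.sum_congr rfl fun i _ => ?_
    simp [Complex.star_def, Complex.sq_norm, Complex.normSq_apply]
  rw [hnorm, hnorm] at hinner
  exact hinner

lemma sF_smul {n : Type*} [Fintype n] (σ : Matrix n n ℂ) (z : ℂ) (φ : n → ℂ) :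
    sF σ (z • φ) (z • φ) = (Complex.normSq z : ℂ) * sF σ φ φ := by
  unfold sF
  rw [Matrix.mulVec_smul, dotProduct_smul, star_smul, smul_dotProduct]
  rw [smul_eq_mul, smul_eq_mul, Complex.star_def, ← Complex.mul_conj]
  ring

end Single

section Multi

open Matrix Finset Complex

variable {N : ℕ} {ι : Fin N → Type*} [∀ j, Fintype (ι j)]

/-- The set over which `maxOverlap` takes the supremum. -/
def ovSet (ρ : Matrix (∀ j, ι j) (∀ j, ι j) ℂ) : Set ℝ :=
  {r : ℝ | ∃ a : ∀ j, ι j → ℂ, (∀ j, IsUnitVec (a j)) ∧ r = overlap ρ (prodVec a)}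

lemma maxOverlap_eq_sSup (ρ : Matrix (∀ j, ι j) (∀ j, ι j) ℂ) :
    maxOverlap ρ = sSup (ovSet ρ) := rfl

lemma isUnitVec_prodVec {a : ∀ j, ι j → ℂ} (ha : ∀ j, IsUnitVec (a j)) :
    IsUnitVec (prodVec a) := by
  classical
  unfold IsUnitVec prodVec
  calc ∑ x : ∀ j, ι j, ‖∏ j, a j (x j)‖ ^ 2
      = ∑ x : ∀ j, ι j, ∏ j, ‖a j (x j)‖ ^ 2 := by
        refine Finset.sum_congr rfl fun x _ => ?_
        rw [norm_prod, Finset.prod_pow]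
    _ = ∏ j, ∑ y, ‖a j y‖ ^ 2 := (Fintype.prod_sum (fun j y => ‖a j y‖ ^ 2)).symm
    _ = 1 := Finset.prod_eq_one fun j _ => ha j

lemma unitVec_coord_le {φ : (∀ j, ι j) → ℂ} (h : IsUnitVec φ) (i : ∀ j, ι j) :
    ‖φ i‖ ≤ 1 := by
  have h1 : ‖φ i‖ ^ 2 ≤ 1 := by
    rw [← h]
    exact Finset.single_le_sum (f := fun x => ‖φ x‖ ^ 2) (fun x _ => by positivity)
      (Finset.mem_univ i)
  nlinarith [norm_nonneg (φ i)]

lemma ovSet_bddAbove (ρ : Matrix (∀ j, ι j) (∀ j, ι j) ℂ) : BddAbove (ovSet ρ) := by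
  refine ⟨∑ i : ∀ j, ι j, ∑ i' : ∀ j, ι j, ‖ρ i i'‖, ?_⟩
  rintro r ⟨a, ha, rfl⟩
  have hu := isUnitVec_prodVec ha
  rw [overlap_eq_re_sF, sF_eq_sum]
  calc (∑ i, ∑ i', (starRingEnd ℂ) (prodVec a i) * ρ i i' * prodVec a i').re
      ≤ ‖∑ i, ∑ i', (starRingEnd ℂ) (prodVec a i) * ρ i i' * prodVec a i'‖ :=
        Complex.re_le_norm _
    _ ≤ ∑ i, ∑ i', ‖(starRingEnd ℂ) (prodVec a i) * ρ i i' * prodVec a i'‖ := by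
        refine (norm_sum_le _ _).trans (Finset.sum_le_sum fun i _ => norm_sum_le _ _)
    _ ≤ ∑ i, ∑ i', ‖ρ i i'‖ := by
        refine Finset.sum_le_sum fun i _ => Finset.sum_le_sum fun i' _ => ?_
        rw [norm_mul, norm_mul, RCLike.norm_conj]
        calc ‖prodVec a i‖ * ‖ρ i i'‖ * ‖prodVec a i'‖
            ≤ 1 * ‖ρ i i'‖ * 1 := by
              gcongr <;> [exact unitVec_coord_le hu i; exact unitVec_coord_le hu i']
          _ = ‖ρ i i'‖ := by ring

lemma ovSet_nonneg {ρ : Matrix (∀ j, ι j) (∀ j, ι j) ℂ} (hρ : ρ.PosSemidef) :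
    ∀ r ∈ ovSet ρ, 0 ≤ r := by
  rintro r ⟨a, ha, rfl⟩
  exact overlap_nonneg hρ _

/-- Standard basis product vectors realise the diagonal entries. -/
lemma diag_mem_ovSet [∀ j, DecidableEq (ι j)] (ρ : Matrix (∀ j, ι j) (∀ j, ι j) ℂ)
    (i : ∀ j, ι j) : (ρ i i).re ∈ ovSet ρ := by
  classical
  refine ⟨fun j x => if x = i j then 1 else 0, fun j => ?_, ?_⟩
  · unfold IsUnitVec
    simp [apply_ite]
  · have hveq : prodVec (fun j x => if x = i j then 1 else 0)
        = fun p => if p = i then (1:ℂ) else 0 := by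
      funext p
      unfold prodVec
      by_cases hp : p = i
      · subst hp; simp
      · obtain ⟨j, hj⟩ : ∃ j, p j ≠ i j := by
          by_contra hc
          push_neg at hc
          exact hp (funext hc)
        rw [if_neg hp]
        exact Finset.prod_eq_zero (Finset.mem_univ j) (by simp [hj])
    rw [overlap_eq_re_sF, hveq, sF_eq_sum]
    rw [Finset.sum_eq_single i, Finset.sum_eq_single i]
    · simp
    · intro b _ hb; simp [hb]
    · intro h; exact absurd (Finset.mem_univ i) h
    · intro b _ hb
      simp [hb]
    · intro h; exact absurd (Finset.mem_univ i) h

lemma nonempty_index {ρ : Matrix (∀ j, ι j) (∀ j, ι j) ℂ} (hρ : IsDensityMatrix ρ) :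
    Nonempty (∀ j, ι j) := by
  by_contra h
  have : IsEmpty (∀ j, ι j) := not_nonempty_iff.mp h
  have := hρ.2
  rw [Matrix.trace] at this
  simp [Finset.univ_eq_empty] at this

lemma maxOverlap_pos [∀ j, DecidableEq (ι j)] {ρ : Matrix (∀ j, ι j) (∀ j, ι j) ℂ}
    (hρ : IsDensityMatrix ρ) : 0 < maxOverlap ρ := by
  classical
  have htr : ∑ i : ∀ j, ι j, (ρ i i).re = 1 := by
    have := congrArg Complex.re hρ.2
    rw [Matrix.trace] at this
    simpa [Matrix.diag, Complex.re_sum] using this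
  have hnn : ∀ i : ∀ j, ι j, 0 ≤ (ρ i i).re := fun i =>
    ovSet_nonneg hρ.1 _ (diag_mem_ovSet ρ i)
  obtain ⟨i, hi⟩ : ∃ i : ∀ j, ι j, 0 < (ρ i i).re := by
    by_contra hc
    push_neg at hc
    have : ∑ i : ∀ j, ι j, (ρ i i).re ≤ 0 :=
      Finset.sum_nonpos fun i _ => hc i
    linarith
  calc (0:ℝ) < (ρ i i).re := hi
    _ ≤ maxOverlap ρ := le_csSup (ovSet_bddAbove ρ) (diag_mem_ovSet ρ i)

/-- Bound for the quadratic form on a (possibly unnormalized) product vector. -/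
lemma re_sF_prodVec_le [∀ j, DecidableEq (ι j)] {ρ : Matrix (∀ j, ι j) (∀ j, ι j) ℂ}
    (hρ : ρ.PosSemidef) (b : ∀ j, ι j → ℂ) :
    (sF ρ (prodVec b) (prodVec b)).re ≤ maxOverlap ρ * ∏ j, ∑ y, ‖b j y‖ ^ 2 := by
  classical
  by_cases hz : ∃ j, ∑ y, ‖b j y‖ ^ 2 = 0
  · obtain ⟨j0, hj0⟩ := hz
    have hb : ∀ y, b j0 y = 0 := by
      intro y
      have := (Finset.sum_eq_zero_iff_of_nonneg (fun y _ => by positivity)).mp hj0 y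
        (Finset.mem_univ y)
      have h2 : ‖b j0 y‖ = 0 := by nlinarith [norm_nonneg (b j0 y)]
      simpa using h2
    have hzero : prodVec b = 0 := by
      funext p
      exact Finset.prod_eq_zero (Finset.mem_univ j0) (hb _)
    rw [hzero, Finset.prod_eq_zero (Finset.mem_univ j0) hj0]
    simp [sF]
  · push_neg at hz
    have hpos : ∀ j, 0 < ∑ y, ‖b j y‖ ^ 2 := fun j =>
      lt_of_le_of_ne (by positivity) (Ne.symm (hz j))
    set s : Fin N → ℝ := fun j => ∑ y, ‖b j y‖ ^ 2 with hs
    set c : ∀ j, ι j → ℂ := fun j y => ((Real.sqrt (s j) : ℂ))⁻¹ * b j y with hc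
    have hsqpos : ∀ j, (0:ℝ) < Real.sqrt (s j) := fun j => Real.sqrt_pos.mpr (hpos j)
    have hcu : ∀ j, IsUnitVec (c j) := by
      intro j
      unfold IsUnitVec
      have h1 : ∀ y, ‖c j y‖ ^ 2 = (s j)⁻¹ * ‖b j y‖ ^ 2 := by
        intro y
        rw [hc]
        simp only [norm_mul, mul_pow, norm_inv, Complex.norm_real, Real.norm_eq_abs,
          _root_.abs_of_nonneg (Real.sqrt_nonneg _), inv_pow]
        rw [Real.sq_sqrt (hpos j).le]
      rw [Finset.sum_congr rfl fun y _ => h1 y, ← Finset.mul_sum]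
      exact inv_mul_cancel₀ (hz j)
    have hbc : prodVec b = ((∏ j, Real.sqrt (s j) : ℝ) : ℂ) • prodVec c := by
      funext p
      unfold prodVec
      rw [Pi.smul_apply, smul_eq_mul, Complex.ofReal_prod, ← Finset.prod_mul_distrib]
      refine Finset.prod_congr rfl fun j _ => ?_
      rw [hc]
      rw [← mul_assoc, mul_inv_cancel₀ (by exact_mod_cast (hsqpos j).ne'), one_mul]
    rw [hbc, sF_smul, Complex.re_ofReal_mul, Complex.normSq_ofReal]
    have hprod : (∏ j, Real.sqrt (s j)) * (∏ j, Real.sqrt (s j)) = ∏ j, s j := by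
      rw [← Finset.prod_mul_distrib]
      exact Finset.prod_congr rfl fun j _ => Real.mul_self_sqrt (hpos j).le
    rw [hprod]
    have hmem : (sF ρ (prodVec c) (prodVec c)).re ≤ maxOverlap ρ :=
      le_csSup (ovSet_bddAbove ρ) ⟨c, hcu, rfl⟩
    calc (∏ j, s j) * (sF ρ (prodVec c) (prodVec c)).re
        ≤ (∏ j, s j) * maxOverlap ρ := by
          refine mul_le_mul_of_nonneg_left hmem ?_
          exact Finset.prod_nonneg fun j _ => (hpos j).le
      _ = maxOverlap ρ * ∏ j, s j := mul_comm _ _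

end Multi

section Tensor

open Matrix Finset Complex

variable {N : ℕ} {ι κ : Fin N → Type*} [∀ j, Fintype (ι j)] [∀ j, Fintype (κ j)]

lemma sum_pi_prod (f : (∀ j, ι j × κ j) → ℂ) :
    ∑ p, f p = ∑ i : ∀ j, ι j, ∑ k : ∀ j, κ j, f (fun j => (i j, k j)) := by
  classical
  rw [← Equiv.sum_comp (⟨fun ik j => (ik.1 j, ik.2 j),
    fun p => (fun j => (p j).1, fun j => (p j).2), fun _ => rfl, fun _ => rfl⟩ :
    ((∀ j, ι j) × (∀ j, κ j)) ≃ (∀ j, ι j × κ j)) f, Fintype.sum_prod_type]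
  rfl

lemma sum_pi_prod₂ (g : (∀ j, ι j × κ j) → (∀ j, ι j × κ j) → ℂ) :
    ∑ p, ∑ p', g p p' = ∑ i : ∀ j, ι j, ∑ i' : ∀ j, ι j, ∑ k : ∀ j, κ j, ∑ k' : ∀ j, κ j,
      g (fun j => (i j, k j)) (fun j => (i' j, k' j)) := by
  rw [sum_pi_prod (f := fun p => ∑ p', g p p')]
  refine Finset.sum_congr rfl fun i _ => ?_
  calc ∑ k : ∀ j, κ j, ∑ p', g (fun j => (i j, k j)) p'
      = ∑ k : ∀ j, κ j, ∑ i' : ∀ j, ι j, ∑ k' : ∀ j, κ j,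
          g (fun j => (i j, k j)) (fun j => (i' j, k' j)) :=
        Finset.sum_congr rfl fun k _ => sum_pi_prod _
    _ = _ := Finset.sum_comm

/-- Expansion of the quadratic form of the grouped tensor product. -/
lemma sF_tensor_expand (ρ : Matrix (∀ j, ι j) (∀ j, ι j) ℂ)
    (σ : Matrix (∀ j, κ j) (∀ j, κ j) ℂ) (v : ∀ j, ι j × κ j → ℂ) :
    sF (tensorGrouped ρ σ) (prodVec v) (prodVec v)
      = ∑ i : ∀ j, ι j, ∑ i' : ∀ j, ι j, ρ i i' *
          sF σ (fun k => ∏ j, v j (i j, k j)) (fun k => ∏ j, v j (i' j, k j)) := by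
  classical
  rw [sF_eq_sum]
  rw [sum_pi_prod₂ (g := fun p p' => (starRingEnd ℂ) (prodVec v p) *
    tensorGrouped ρ σ p p' * prodVec v p')]
  refine Finset.sum_congr rfl fun i _ => Finset.sum_congr rfl fun i' _ => ?_
  rw [sF_eq_sum, Finset.mul_sum]
  refine Finset.sum_congr rfl fun k _ => ?_
  rw [Finset.mul_sum]
  refine Finset.sum_congr rfl fun k' _ => ?_
  simp only [tensorGrouped, prodVec]
  ring

lemma sF_smul₂ {n : Type*} [Fintype n] (σ : Matrix n n ℂ) (z w : ℂ) (x y : n → ℂ) :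
    sF σ (z • x) (w • y) = (starRingEnd ℂ) z * w * sF σ x y := by
  unfold sF
  rw [Matrix.mulVec_smul, dotProduct_smul, star_smul, smul_dotProduct]
  rw [smul_eq_mul, smul_eq_mul, Complex.star_def]
  ring

lemma sF_tensor_prod (ρ : Matrix (∀ j, ι j) (∀ j, ι j) ℂ)
    (σ : Matrix (∀ j, κ j) (∀ j, κ j) ℂ) (a : ∀ j, ι j → ℂ) (b : ∀ j, κ j → ℂ) :
    sF (tensorGrouped ρ σ) (prodVec (fun j xy => a j xy.1 * b j xy.2))
        (prodVec (fun j xy => a j xy.1 * b j xy.2))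
      = sF ρ (prodVec a) (prodVec a) * sF σ (prodVec b) (prodVec b) := by
  classical
  rw [sF_tensor_expand]
  have hu : ∀ (i : ∀ j, ι j),
      (fun k : ∀ j, κ j => ∏ j, (fun (j : Fin N) (xy : ι j × κ j) => a j xy.1 * b j xy.2) j (i j, k j))
      = prodVec a i • prodVec b := by
    intro i
    funext k
    simp only [Pi.smul_apply, smul_eq_mul, prodVec]
    exact Finset.prod_mul_distrib
  calc ∑ i : ∀ j, ι j, ∑ i' : ∀ j, ι j, ρ i i' *
        sF σ (fun k => ∏ j, (fun (j : Fin N) (xy : ι j × κ j) => a j xy.1 * b j xy.2) j (i j, k j))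
             (fun k => ∏ j, (fun (j : Fin N) (xy : ι j × κ j) => a j xy.1 * b j xy.2) j (i' j, k j))
      = ∑ i : ∀ j, ι j, ∑ i' : ∀ j, ι j, ρ i i' *
          ((starRingEnd ℂ) (prodVec a i) * prodVec a i' * sF σ (prodVec b) (prodVec b)) := by
        refine Finset.sum_congr rfl fun i _ => Finset.sum_congr rfl fun i' _ => ?_
        rw [hu i, hu i', sF_smul₂]
    _ = sF ρ (prodVec a) (prodVec a) * sF σ (prodVec b) (prodVec b) := by
        rw [sF_eq_sum ρ, Finset.sum_mul]
        refine Finset.sum_congr rfl fun i _ => ?_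
        rw [Finset.sum_mul]
        refine Finset.sum_congr rfl fun i' _ => ?_
        ring

lemma prod_mem_ovSet_tensor {ρ : Matrix (∀ j, ι j) (∀ j, ι j) ℂ}
    {σ : Matrix (∀ j, κ j) (∀ j, κ j) ℂ} (hρ : ρ.PosSemidef) (hσ : σ.PosSemidef)
    {r s : ℝ} (hr : r ∈ ovSet ρ) (hs : s ∈ ovSet σ) :
    r * s ∈ ovSet (tensorGrouped ρ σ) := by
  classical
  obtain ⟨a, ha, rfl⟩ := hr
  obtain ⟨b, hb, rfl⟩ := hs
  refine ⟨fun j xy => a j xy.1 * b j xy.2, fun j => ?_, ?_⟩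
  · unfold IsUnitVec
    rw [Fintype.sum_prod_type]
    calc ∑ x, ∑ y, ‖a j x * b j y‖ ^ 2
        = ∑ x, ∑ y, ‖a j x‖ ^ 2 * ‖b j y‖ ^ 2 := by
          refine Finset.sum_congr rfl fun x _ => Finset.sum_congr rfl fun y _ => ?_
          rw [norm_mul, mul_pow]
      _ = (∑ x, ‖a j x‖ ^ 2) * (∑ y, ‖b j y‖ ^ 2) := by
          rw [Finset.sum_mul]
          exact Finset.sum_congr rfl fun x _ => (Finset.mul_sum _ _ _).symm
      _ = 1 := by rw [ha j, hb j, one_mul]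
  · rw [overlap_eq_re_sF, overlap_eq_re_sF, overlap_eq_re_sF, sF_tensor_prod]
    rw [Complex.mul_re, (sF_self_nonneg hρ _).2, (sF_self_nonneg hσ _).2]
    ring

/-- Hard direction: any overlap with the grouped tensor product is bounded by the product
of the maximal overlaps, when ρ has non-negative entries. -/
lemma tensor_overlap_le [∀ j, DecidableEq (ι j)] [∀ j, DecidableEq (κ j)]
    {ρ : Matrix (∀ j, ι j) (∀ j, ι j) ℂ} {σ : Matrix (∀ j, κ j) (∀ j, κ j) ℂ}
    (hρ : ρ.PosSemidef) (hρn : IsNonnegMatrix ρ) (hσ : σ.PosSemidef)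
    (hσΛ : 0 ≤ maxOverlap σ)
    {t : ℝ} (ht : t ∈ ovSet (tensorGrouped ρ σ)) :
    t ≤ maxOverlap ρ * maxOverlap σ := by
  classical
  obtain ⟨v, hv, rfl⟩ := ht
  rw [overlap_eq_re_sF, sF_tensor_expand]
  -- the σ-side vectors
  set u : (∀ j, ι j) → (∀ j, κ j) → ℂ := fun i k => ∏ j, v j (i j, k j) with hudef
  -- their σ-quadratic forms and norms
  set q : (∀ j, ι j) → ℝ := fun i => (sF σ (u i) (u i)).re with hq
  set c : ∀ j, ι j → ℝ := fun j x => Real.sqrt (∑ y, ‖v j (x, y)‖ ^ 2) with hcdef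
  set nv : (∀ j, ι j) → ℝ := fun i => ∏ j, c j (i j) with hn
  have hnnonneg : ∀ i, 0 ≤ nv i := fun i =>
    Finset.prod_nonneg fun j _ => Real.sqrt_nonneg _
  have hq0 : ∀ i, 0 ≤ q i := fun i => (sF_self_nonneg hσ (u i)).1
  -- q i ≤ Λσ * (nv i)^2
  have hqle : ∀ i, q i ≤ maxOverlap σ * nv i ^ 2 := by
    intro i
    have h1 : q i ≤ maxOverlap σ * ∏ j, ∑ y, ‖v j (i j, y)‖ ^ 2 := by
      have := re_sF_prodVec_le (ι := κ) hσ (fun j y => v j (i j, y))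
      exact this
    have h2 : nv i ^ 2 = ∏ j, ∑ y, ‖v j (i j, y)‖ ^ 2 := by
      rw [hn]
      rw [← Finset.prod_pow]
      refine Finset.prod_congr rfl fun j _ => ?_
      rw [hcdef]
      exact Real.sq_sqrt (by positivity)
    rw [h2]
    exact h1
  -- √(q i) ≤ √Λσ * nv i
  have hsq : ∀ i, Real.sqrt (q i) ≤ Real.sqrt (maxOverlap σ) * nv i := by
    intro i
    calc Real.sqrt (q i) ≤ Real.sqrt (maxOverlap σ * nv i ^ 2) :=
          Real.sqrt_le_sqrt (hqle i)
      _ = Real.sqrt (maxOverlap σ) * nv i := by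
          rw [Real.sqrt_mul hσΛ, Real.sqrt_sq (hnnonneg i)]
  -- termwise bound
  have hterm : ∀ i i', (ρ i i' * sF σ (u i) (u i')).re
      ≤ (ρ i i').re * (Real.sqrt (maxOverlap σ) * nv i) * (Real.sqrt (maxOverlap σ) * nv i') := by
    intro i i'
    have him : (ρ i i').im = 0 := (hρn i i').2
    have hre : 0 ≤ (ρ i i').re := (hρn i i').1
    rw [Complex.mul_re, him, zero_mul, sub_zero]
    calc (ρ i i').re * (sF σ (u i) (u i')).re
        ≤ (ρ i i').re * (Real.sqrt (q i) * Real.sqrt (q i')) := by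
          refine mul_le_mul_of_nonneg_left ?_ hre
          calc (sF σ (u i) (u i')).re ≤ ‖sF σ (u i) (u i')‖ := Complex.re_le_norm _
            _ ≤ Real.sqrt (q i) * Real.sqrt (q i') := sF_abs_le hσ _ _
      _ ≤ (ρ i i').re * ((Real.sqrt (maxOverlap σ) * nv i) * (Real.sqrt (maxOverlap σ) * nv i')) := by
          refine mul_le_mul_of_nonneg_left ?_ hre
          exact mul_le_mul (hsq i) (hsq i') (Real.sqrt_nonneg _)
            (by positivity)
      _ = (ρ i i').re * (Real.sqrt (maxOverlap σ) * nv i) * (Real.sqrt (maxOverlap σ) * nv i') := by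
          ring
  -- the real product vector made of the norms
  have hcunit : ∀ j, IsUnitVec (fun x => (c j x : ℂ)) := by
    intro j
    unfold IsUnitVec
    have hv' := hv j
    unfold IsUnitVec at hv'
    rw [Fintype.sum_prod_type] at hv'
    rw [← hv']
    refine Finset.sum_congr rfl fun x _ => ?_
    rw [hcdef]
    rw [Complex.norm_real, Real.norm_eq_abs, _root_.abs_of_nonneg (Real.sqrt_nonneg _)]
    exact Real.sq_sqrt (by positivity)
  have hprodn : ∀ i, prodVec (fun j x => (c j x : ℂ)) i = ((nv i : ℝ) : ℂ) := by
    intro i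
    rw [hn, prodVec, Complex.ofReal_prod]
  have hoverlap : ∑ i, ∑ i', (ρ i i').re * nv i * nv i'
      = overlap ρ (prodVec (fun j x => (c j x : ℂ))) := by
    rw [overlap_eq_re_sF, sF_eq_sum, Complex.re_sum]
    refine Finset.sum_congr rfl fun i _ => ?_
    rw [Complex.re_sum]
    refine Finset.sum_congr rfl fun i' _ => ?_
    rw [hprodn, hprodn]
    rw [show (starRingEnd ℂ) ((nv i : ℝ) : ℂ) * ρ i i' * ((nv i' : ℝ) : ℂ)
        = ((nv i * nv i' : ℝ) : ℂ) * ρ i i' by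
      rw [Complex.conj_ofReal]; push_cast; ring]
    rw [Complex.re_ofReal_mul]
    ring
  have hover_le : overlap ρ (prodVec (fun j x => (c j x : ℂ))) ≤ maxOverlap ρ :=
    le_csSup (ovSet_bddAbove ρ) ⟨fun j x => (c j x : ℂ), hcunit, rfl⟩
  calc (∑ i, ∑ i', ρ i i' * sF σ (u i) (u i')).re
      = ∑ i, ∑ i', (ρ i i' * sF σ (u i) (u i')).re := by
        rw [Complex.re_sum]
        exact Finset.sum_congr rfl fun i _ => Complex.re_sum _ _
    _ ≤ ∑ i, ∑ i', (ρ i i').re * (Real.sqrt (maxOverlap σ) * nv i)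
          * (Real.sqrt (maxOverlap σ) * nv i') :=
        Finset.sum_le_sum fun i _ => Finset.sum_le_sum fun i' _ => hterm i i'
    _ = maxOverlap σ * ∑ i, ∑ i', (ρ i i').re * nv i * nv i' := by
        rw [Finset.mul_sum]
        refine Finset.sum_congr rfl fun i _ => ?_
        rw [Finset.mul_sum]
        refine Finset.sum_congr rfl fun i' _ => ?_
        linear_combination ((ρ i i').re * nv i * nv i') * (Real.mul_self_sqrt hσΛ)
    _ = maxOverlap σ * overlap ρ (prodVec (fun j x => (c j x : ℂ))) := by rw [hoverlap]
    _ ≤ maxOverlap σ * maxOverlap ρ := mul_le_mul_of_nonneg_left hover_le hσΛ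
    _ = maxOverlap ρ * maxOverlap σ := mul_comm _ _

end Tensor

/-- **Strong additivity of the geometric measure for non-negative states.**
If all entries of the N-partite density matrix ρ in the computational product basis are
non-negative reals, then for any N-partite density matrix σ,
Λ²(ρ ⊗ σ) = Λ²(ρ)·Λ²(σ), equivalently G(ρ ⊗ σ) = G(ρ) + G(σ). -/
theorem gm_strong_additive_of_nonneg {N : ℕ} (d d' : Fin N → ℕ)
    (ρ : Matrix (∀ j, Fin (d j)) (∀ j, Fin (d j)) ℂ)
    (σ : Matrix (∀ j, Fin (d' j)) (∀ j, Fin (d' j)) ℂ)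
    (hρ : IsDensityMatrix ρ) (hρn : IsNonnegMatrix ρ) (hσ : IsDensityMatrix σ) :
    maxOverlap (tensorGrouped ρ σ) = maxOverlap ρ * maxOverlap σ ∧
    gm (tensorGrouped ρ σ) = gm ρ + gm σ := by
  classical
  have hΛρpos : 0 < maxOverlap ρ := maxOverlap_pos hρ
  have hΛσpos : 0 < maxOverlap σ := maxOverlap_pos hσ
  have hbddT := ovSet_bddAbove (tensorGrouped ρ σ)
  obtain ⟨i0⟩ := nonempty_index hρ
  obtain ⟨k0⟩ := nonempty_index hσ
  have hneρ : (ovSet ρ).Nonempty := ⟨_, diag_mem_ovSet ρ i0⟩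
  have hneσ : (ovSet σ).Nonempty := ⟨_, diag_mem_ovSet σ k0⟩
  have hmemT := prod_mem_ovSet_tensor hρ.1 hσ.1 (diag_mem_ovSet ρ i0) (diag_mem_ovSet σ k0)
  have hneT : (ovSet (tensorGrouped ρ σ)).Nonempty := ⟨_, hmemT⟩
  have hT0 : 0 ≤ maxOverlap (tensorGrouped ρ σ) := by
    refine le_trans ?_ (le_csSup hbddT hmemT)
    exact mul_nonneg (ovSet_nonneg hρ.1 _ (diag_mem_ovSet ρ i0))
      (ovSet_nonneg hσ.1 _ (diag_mem_ovSet σ k0))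
  have hle : maxOverlap (tensorGrouped ρ σ) ≤ maxOverlap ρ * maxOverlap σ :=
    csSup_le hneT fun t ht => tensor_overlap_le hρ.1 hρn hσ.1 hΛσpos.le ht
  have hge : maxOverlap ρ * maxOverlap σ ≤ maxOverlap (tensorGrouped ρ σ) := by
    have step1 : ∀ r ∈ ovSet ρ, r * maxOverlap σ ≤ maxOverlap (tensorGrouped ρ σ) := by
      intro r hr
      have hr0 : 0 ≤ r := ovSet_nonneg hρ.1 r hr
      rcases eq_or_lt_of_le hr0 with h0 | hpos
      · rw [← h0, zero_mul]; exact hT0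
      · have hσle : maxOverlap σ ≤ maxOverlap (tensorGrouped ρ σ) / r := by
          refine csSup_le hneσ fun s hs => ?_
          rw [le_div_iff₀ hpos]
          calc s * r = r * s := mul_comm _ _
            _ ≤ maxOverlap (tensorGrouped ρ σ) :=
              le_csSup hbddT (prod_mem_ovSet_tensor hρ.1 hσ.1 hr hs)
        calc r * maxOverlap σ = maxOverlap σ * r := mul_comm _ _
          _ ≤ maxOverlap (tensorGrouped ρ σ) := (le_div_iff₀ hpos).mp hσle
    have hρle : maxOverlap ρ ≤ maxOverlap (tensorGrouped ρ σ) / maxOverlap σ := by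
      refine csSup_le hneρ fun r hr => ?_
      rw [le_div_iff₀ hΛσpos]
      exact step1 r hr
    calc maxOverlap ρ * maxOverlap σ
        ≤ (maxOverlap (tensorGrouped ρ σ) / maxOverlap σ) * maxOverlap σ :=
          mul_le_mul_of_nonneg_right hρle hΛσpos.le
      _ = maxOverlap (tensorGrouped ρ σ) := div_mul_cancel₀ _ hΛσpos.ne'
  have heq : maxOverlap (tensorGrouped ρ σ) = maxOverlap ρ * maxOverlap σ :=
    le_antisymm hle hge
  refine ⟨heq, ?_⟩
  unfold gm
  rw [heq, Real.logb_mul hΛρpos.ne' hΛσpos.ne']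
  ring

end Paper
end

section
/- The closest product state to a non-negative state can be chosen non-negative: if ρ is an N-partite density matrix on ⊗_{j=1}^N ℂ^{d_j} all of whose entries in the computational product basis are non-negative real numbers, then there exists a product vector φ = a_1 ⊗ ⋯ ⊗ a_N, in which every factor a_j has non-negative real entries in the computational basis of ℂ^{d_j}, such that ⟨φ|ρ|φ⟩ = Λ²(ρ). -/
open scoped BigOperators ComplexOrder

namespace Paper

lemma overlap_eq {n : Type*} [Fintype n] (ρ : Matrix n n ℂ) (φ : n → ℂ) :
    overlap ρ φ = ∑ i, ∑ i', ((starRingEnd ℂ) (φ i) * ρ i i' * φ i').re := by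
  unfold overlap dotProduct Matrix.mulVec
  rw [Complex.re_sum]
  refine Finset.sum_congr rfl fun i _ => ?_
  simp only [Pi.star_apply, dotProduct, Finset.mul_sum, Complex.re_sum]
  refine Finset.sum_congr rfl fun i' _ => ?_
  congr 1
  rw [Complex.star_def]
  ring

lemma overlap_le_abs {n : Type*} [Fintype n] (ρ : Matrix n n ℂ) (hρn : IsNonnegMatrix ρ)
    (φ : n → ℂ) :
    overlap ρ φ ≤ overlap ρ (fun i => ((‖φ i‖ : ℝ) : ℂ)) := by
  rw [overlap_eq, overlap_eq]
  refine Finset.sum_le_sum fun i _ => Finset.sum_le_sum fun i' _ => ?_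
  obtain ⟨hre, him⟩ := hρn i i'
  have hr : ρ i i' = ((ρ i i').re : ℂ) := Complex.ext rfl (by simp [him])
  rw [hr]
  set r := (ρ i i').re with hrdef
  calc ((starRingEnd ℂ) (φ i) * (r : ℂ) * φ i').re
      ≤ ‖(starRingEnd ℂ) (φ i) * (r : ℂ) * φ i'‖ := Complex.re_le_norm _
    _ = ‖φ i‖ * r * ‖φ i'‖ := by
        simp [map_mul, Complex.norm_real, abs_of_nonneg hre]
    _ = ((starRingEnd ℂ) ((‖φ i‖ : ℝ) : ℂ) * (r : ℂ) * ((‖φ i'‖ : ℝ) : ℂ)).re := by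
        rw [Complex.conj_ofReal, ← Complex.ofReal_mul, ← Complex.ofReal_mul, Complex.ofReal_re]

lemma prodVec_abs {N : ℕ} {ι : Fin N → Type*} (a : ∀ j, ι j → ℂ) :
    (fun i => ((‖prodVec a i‖ : ℝ) : ℂ)) = prodVec (fun j x => ((‖a j x‖ : ℝ) : ℂ)) := by
  funext i
  simp [prodVec, norm_prod, Complex.ofReal_prod]

/-- **The closest product state to a non-negative state can be chosen non-negative.**
If ρ is an N-partite density matrix with non-negative entries in the computational
product basis, then Λ²(ρ) is attained by a product vector all of whose factors have
non-negative real entries in the computational basis. -/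
theorem closest_product_state_nonneg {N : ℕ} (d : Fin N → ℕ)
    (ρ : Matrix (∀ j, Fin (d j)) (∀ j, Fin (d j)) ℂ)
    (hρ : IsDensityMatrix ρ) (hρn : IsNonnegMatrix ρ) :
    ∃ a : ∀ j, Fin (d j) → ℂ, (∀ j, IsUnitVec (a j)) ∧
      (∀ j x, 0 ≤ (a j x).re ∧ (a j x).im = 0) ∧
      overlap ρ (prodVec a) = maxOverlap ρ := by
  classical
  -- every party is nontrivial
  have hd : ∀ j, 0 < d j := by
    intro j
    rcases Nat.eq_zero_or_pos (d j) with h | h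
    · exfalso
      have hE : IsEmpty (∀ j, Fin (d j)) := ⟨fun f => absurd (f j).2 (by simp [h])⟩
      have := hρ.2
      rw [Matrix.trace] at this
      simp [Finset.univ_eq_empty] at this
    · exact h
  set K : Set (∀ j, Fin (d j) → ℂ) := {a | ∀ j, IsUnitVec (a j)} with hK
  set f : (∀ j, Fin (d j) → ℂ) → ℝ := fun a => overlap ρ (prodVec a) with hf
  have hfc : Continuous f := by
    have : f = fun a => ∑ i, ∑ i',
        ((starRingEnd ℂ) (∏ j, a j (i j)) * ρ i i' * ∏ j, a j (i' j)).re := by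
      funext a
      show overlap ρ (prodVec a) = _
      rw [overlap_eq]
      rfl
    rw [this]
    fun_prop
  have hKc : IsClosed K := by
    have : K = ⋂ j, {a : ∀ j, Fin (d j) → ℂ | ∑ x, ‖a j x‖ ^ 2 = 1} := by
      ext a; simp [hK, IsUnitVec]
    rw [this]
    exact isClosed_iInter fun j => isClosed_eq (by fun_prop) continuous_const
  have hnorm_le : ∀ a ∈ K, ∀ j x, ‖a j x‖ ≤ 1 := by
    intro a ha j x
    have h1 : ‖a j x‖ ^ 2 ≤ 1 := by
      rw [← ha j]
      exact Finset.single_le_sum (f := fun y => ‖a j y‖ ^ 2) (fun y _ => by positivity)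
        (Finset.mem_univ x)
    exact (pow_le_one_iff_of_nonneg (norm_nonneg _) two_ne_zero).mp h1
  have hKb : Bornology.IsBounded K := by
    rw [isBounded_iff_forall_norm_le]
    refine ⟨1, fun a ha => ?_⟩
    rw [pi_norm_le_iff_of_nonneg zero_le_one]
    intro j
    rw [pi_norm_le_iff_of_nonneg zero_le_one]
    exact hnorm_le a ha j
  have hKcompact : IsCompact K := Metric.isCompact_of_isClosed_isBounded hKc hKb
  have hKne : K.Nonempty := by
    refine ⟨fun j x => if x = ⟨0, hd j⟩ then 1 else 0, fun j => ?_⟩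
    simp [IsUnitVec, apply_ite (fun z : ℂ => ‖z‖), apply_ite (fun r : ℝ => r ^ 2), Finset.sum_ite_eq']
  obtain ⟨a₀, ha₀K, hmax⟩ := hKcompact.exists_isMaxOn hKne hfc.continuousOn
  have hgreatest : IsGreatest
      {r : ℝ | ∃ a : ∀ j, Fin (d j) → ℂ, (∀ j, IsUnitVec (a j)) ∧ r = overlap ρ (prodVec a)}
      (f a₀) := by
    constructor
    · exact ⟨a₀, ha₀K, rfl⟩
    · rintro r ⟨a, ha, rfl⟩
      exact hmax ha
  have hsup : maxOverlap ρ = f a₀ := hgreatest.csSup_eq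
  -- the nonnegative candidate
  set b : ∀ j, Fin (d j) → ℂ := fun j x => ((‖a₀ j x‖ : ℝ) : ℂ) with hb
  have hbK : b ∈ K := by
    intro j
    have : ∀ x, ‖b j x‖ = ‖a₀ j x‖ := by
      intro x; simp [hb, Complex.norm_real]
    simpa [IsUnitVec, this] using ha₀K j
  have hle : f a₀ ≤ f b := by
    have := overlap_le_abs ρ hρn (prodVec a₀)
    rwa [prodVec_abs] at this
  have hge : f b ≤ f a₀ := hmax hbK
  refine ⟨b, hbK, fun j x => ⟨by simp [hb], by simp [hb]⟩, ?_⟩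
  rw [hsup]
  exact le_antisymm hge hle

end Paper
end

section
/- Geometric measure of the Smolin state: let ρ = (1/16)(I ⊗ I ⊗ I ⊗ I + Σ_{j=1}^3 σ_j ⊗ σ_j ⊗ σ_j ⊗ σ_j) be the four-qubit Smolin state, where σ_1, σ_2, σ_3 are the Pauli matrices and I is the 2×2 identity. Then the maximum of ⟨φ|ρ|φ⟩ over four-qubit product vectors φ = a ⊗ b ⊗ c ⊗ d equals 1/8; that is, Λ²(ρ) = 1/8 and G(ρ) = 3. -/
open scoped BigOperators ComplexOrder

namespace Paper

/-- The three Pauli matrices σ₁, σ₂, σ₃. -/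
noncomputable def pauli : Fin 3 → Matrix (Fin 2) (Fin 2) ℂ := fun k =>
  if k = 0 then !![0, 1; 1, 0]
  else if k = 1 then !![0, -Complex.I; Complex.I, 0]
  else !![1, 0; 0, -1]

/-- The four-qubit Smolin state
ρ = (1/16)(I⊗I⊗I⊗I + Σ_{j=1}^3 σ_j⊗σ_j⊗σ_j⊗σ_j). -/
noncomputable def smolin : Matrix (Fin 4 → Fin 2) (Fin 4 → Fin 2) ℂ := fun i i' =>
  (1 / 16 : ℂ) * ((if i = i' then 1 else 0) + ∑ j : Fin 3, ∏ k : Fin 4, pauli j (i k) (i' k))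

/-- real Bloch component -/
noncomputable def pe (j : Fin 3) (a : Fin 2 → ℂ) : ℝ :=
  if j = 0 then 2 * ((starRingEnd ℂ) (a 0) * a 1).re
  else if j = 1 then 2 * ((starRingEnd ℂ) (a 0) * a 1).im
  else Complex.normSq (a 0) - Complex.normSq (a 1)

lemma pe_eq (j : Fin 3) (a : Fin 2 → ℂ) :
    ∑ x, ∑ y, (starRingEnd ℂ) (a x) * pauli j x y * a y = (pe j a : ℂ) := by
  fin_cases j <;>
    simp [pe, pauli, Fin.sum_univ_two, Complex.ext_iff, Complex.normSq_apply] <;>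
    (ring_nf; exact ⟨trivial, trivial⟩)

lemma qn_eq (a : Fin 2 → ℂ) :
    ∑ x, (starRingEnd ℂ) (a x) * a x = ((∑ x, ‖a x‖ ^ 2 : ℝ) : ℂ) := by
  simp [Fin.sum_univ_two, Complex.ext_iff, Complex.normSq_apply, ← Complex.normSq_eq_norm_sq,
    Complex.sq_norm]
  ring

lemma bloch (a : Fin 2 → ℂ) :
    ∑ j, (pe j a) ^ 2 = (∑ x, ‖a x‖ ^ 2) ^ 2 := by
  simp [pe, Fin.sum_univ_three, Fin.sum_univ_two, Complex.normSq_apply, ← Complex.normSq_eq_norm_sq,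
    Complex.sq_norm]
  ring

lemma sum_prod_fn (f : Fin 4 → Fin 2 → ℂ) :
    ∑ i : Fin 4 → Fin 2, ∏ k, f k (i k) = ∏ k, ∑ x, f k x :=
  (Fintype.prod_sum f).symm

lemma sum_sum_prod (F : Fin 4 → Fin 2 → Fin 2 → ℂ) :
    ∑ i : Fin 4 → Fin 2, ∑ i' : Fin 4 → Fin 2, ∏ k, F k (i k) (i' k)
      = ∏ k, ∑ x, ∑ y, F k x y := by
  calc ∑ i : Fin 4 → Fin 2, ∑ i' : Fin 4 → Fin 2, ∏ k, F k (i k) (i' k)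
      = ∑ i : Fin 4 → Fin 2, ∏ k, ∑ y, F k (i k) y :=
        Finset.sum_congr rfl fun i _ => sum_prod_fn fun k y => F k (i k) y
    _ = ∏ k, ∑ x, ∑ y, F k x y := sum_prod_fn fun k x => ∑ y, F k x y

lemma dot_smolin (a : Fin 4 → Fin 2 → ℂ) :
    dotProduct (star (prodVec a)) (smolin.mulVec (prodVec a))
    = (1/16 : ℂ) * ((∏ k, ∑ x, (starRingEnd ℂ) (a k x) * a k x)
        + ∑ j : Fin 3, ∏ k, ∑ x, ∑ y, (starRingEnd ℂ) (a k x) * pauli j x y * a k y) := by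
  classical
  have h1 : ∀ i i' : Fin 4 → Fin 2,
      (starRingEnd ℂ) (prodVec a i) * (smolin i i' * prodVec a i')
      = (1/16 : ℂ) * ((if i = i' then (∏ k, (starRingEnd ℂ) (a k (i k)) * a k (i' k)) else 0)
          + ∑ j : Fin 3, ∏ k, (starRingEnd ℂ) (a k (i k)) * pauli j (i k) (i' k) * a k (i' k)) := by
    intro i i'
    have hprod : ∀ j : Fin 3,
        (∏ k : Fin 4, (starRingEnd ℂ) (a k (i k)) * pauli j (i k) (i' k) * a k (i' k))
        = (∏ k, (starRingEnd ℂ) (a k (i k))) * (∏ k, pauli j (i k) (i' k))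
            * (∏ k, a k (i' k)) := by
      intro j; rw [Finset.prod_mul_distrib, Finset.prod_mul_distrib]
    have hd : (∏ k : Fin 4, (starRingEnd ℂ) (a k (i k)) * a k (i' k))
        = (∏ k, (starRingEnd ℂ) (a k (i k))) * (∏ k, a k (i' k)) := Finset.prod_mul_distrib
    simp only [prodVec, smolin, map_prod, hprod, hd, Fin.sum_univ_three]
    split_ifs <;> ring
  have expand : dotProduct (star (prodVec a)) (smolin.mulVec (prodVec a))
      = ∑ i : Fin 4 → Fin 2, ∑ i' : Fin 4 → Fin 2,
          (starRingEnd ℂ) (prodVec a i) * (smolin i i' * prodVec a i') := by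
    simp only [dotProduct, Matrix.mulVec, Pi.star_apply, RCLike.star_def]
    exact Finset.sum_congr rfl fun i _ => Finset.mul_sum _ _ _
  rw [expand]
  simp only [h1, ← Finset.mul_sum]
  congr 1
  simp only [Finset.sum_add_distrib]
  congr 1
  · rw [← sum_prod_fn fun k x => (starRingEnd ℂ) (a k x) * a k x]
    refine Finset.sum_congr rfl fun i _ => ?_
    simp
  · calc ∑ i : Fin 4 → Fin 2, ∑ i' : Fin 4 → Fin 2, ∑ j : Fin 3,
          ∏ k, (starRingEnd ℂ) (a k (i k)) * pauli j (i k) (i' k) * a k (i' k)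
        = ∑ i : Fin 4 → Fin 2, ∑ j : Fin 3, ∑ i' : Fin 4 → Fin 2,
          ∏ k, (starRingEnd ℂ) (a k (i k)) * pauli j (i k) (i' k) * a k (i' k) :=
          Finset.sum_congr rfl fun i _ => Finset.sum_comm
      _ = ∑ j : Fin 3, ∑ i : Fin 4 → Fin 2, ∑ i' : Fin 4 → Fin 2,
          ∏ k, (starRingEnd ℂ) (a k (i k)) * pauli j (i k) (i' k) * a k (i' k) :=
          Finset.sum_comm
      _ = ∑ j : Fin 3, ∏ k, ∑ x, ∑ y, (starRingEnd ℂ) (a k x) * pauli j x y * a k y :=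
          Finset.sum_congr rfl fun j _ =>
            sum_sum_prod fun k x y => (starRingEnd ℂ) (a k x) * pauli j x y * a k y

lemma overlap_prodVec (a : Fin 4 → Fin 2 → ℂ) :
    overlap smolin (prodVec a)
      = 1/16 * ((∏ k, ∑ x, ‖a k x‖ ^ 2) + ∑ j : Fin 3, ∏ k, pe j (a k)) := by
  unfold overlap
  rw [dot_smolin]
  simp only [qn_eq, pe_eq, ← Complex.ofReal_prod, ← Complex.ofReal_sum]
  rw [show (1/16 : ℂ) = ((1/16 : ℝ) : ℂ) by norm_num, ← Complex.ofReal_add,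
    ← Complex.ofReal_mul, Complex.ofReal_re]

lemma ineq (x : Fin 4 → Fin 3 → ℝ) (h : ∀ k, ∑ j, x k j ^ 2 = 1) :
    ∑ j : Fin 3, ∏ k, x k j ≤ 1 := by
  have h0 := h 0; have h1 := h 1; have h2 := h 2; have h3 := h 3
  simp only [Fin.sum_univ_three] at h0 h1 h2 h3
  simp only [Fin.sum_univ_three, Fin.prod_univ_four]
  nlinarith [sq_nonneg (x 0 0 * x 1 0 - x 2 0 * x 3 0),
    sq_nonneg (x 0 1 * x 1 1 - x 2 1 * x 3 1),
    sq_nonneg (x 0 2 * x 1 2 - x 2 2 * x 3 2),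
    mul_nonneg (sq_nonneg (x 0 0)) (sq_nonneg (x 1 1)),
    mul_nonneg (sq_nonneg (x 0 0)) (sq_nonneg (x 1 2)),
    mul_nonneg (sq_nonneg (x 0 1)) (sq_nonneg (x 1 0)),
    mul_nonneg (sq_nonneg (x 0 1)) (sq_nonneg (x 1 2)),
    mul_nonneg (sq_nonneg (x 0 2)) (sq_nonneg (x 1 0)),
    mul_nonneg (sq_nonneg (x 0 2)) (sq_nonneg (x 1 1)),
    mul_nonneg (sq_nonneg (x 2 0)) (sq_nonneg (x 3 1)),
    mul_nonneg (sq_nonneg (x 2 0)) (sq_nonneg (x 3 2)),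
    mul_nonneg (sq_nonneg (x 2 1)) (sq_nonneg (x 3 0)),
    mul_nonneg (sq_nonneg (x 2 1)) (sq_nonneg (x 3 2)),
    mul_nonneg (sq_nonneg (x 2 2)) (sq_nonneg (x 3 0)),
    mul_nonneg (sq_nonneg (x 2 2)) (sq_nonneg (x 3 1))]


/-- **Geometric measure of the Smolin state.** The maximum of ⟨φ|ρ|φ⟩ over four-qubit
product vectors equals 1/8; that is, Λ²(ρ) = 1/8 and G(ρ) = 3. -/
theorem gm_smolin :
    IsGreatest {r : ℝ | ∃ a : ∀ _ : Fin 4, Fin 2 → ℂ, (∀ j, IsUnitVec (a j)) ∧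
        r = overlap smolin (prodVec a)} (1 / 8) ∧
    maxOverlap smolin = 1 / 8 ∧
    gm smolin = 3 := by
  have hgreat : IsGreatest {r : ℝ | ∃ a : ∀ _ : Fin 4, Fin 2 → ℂ, (∀ j, IsUnitVec (a j)) ∧
      r = overlap smolin (prodVec a)} (1 / 8) := by
    constructor
    · refine ⟨fun _ => ![1, 0], fun j => ?_, ?_⟩
      · simp [IsUnitVec, Fin.sum_univ_two]
      · rw [overlap_prodVec]
        norm_num [pe, Fin.prod_univ_four, Fin.sum_univ_three, Fin.sum_univ_two,
          show ¬((2:Fin 3) = 0) by decide, show ¬((2:Fin 3) = 1) by decide]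
    · rintro r ⟨a, ha, rfl⟩
      rw [overlap_prodVec]
      have hn : ∀ k : Fin 4, ∑ x, ‖a k x‖ ^ 2 = 1 := fun k => ha k
      have h1 : (∏ k : Fin 4, ∑ x, ‖a k x‖ ^ 2) = 1 := by
        rw [Fin.prod_univ_four, hn 0, hn 1, hn 2, hn 3]; norm_num
      have h2 : ∑ j : Fin 3, ∏ k : Fin 4, pe j (a k) ≤ 1 := by
        have : ∀ k : Fin 4, ∑ j, (fun k j => pe j (a k)) k j ^ 2 = 1 := by
          intro k; rw [bloch, hn k]; norm_num
        exact ineq (fun k j => pe j (a k)) this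
      rw [h1]
      linarith
  have hmax : maxOverlap smolin = 1 / 8 := hgreat.csSup_eq
  refine ⟨hgreat, hmax, ?_⟩
  rw [gm, hmax]
  rw [show (1/8 : ℝ) = (2:ℝ) ^ (-3 : ℝ) by
    rw [show (-3:ℝ) = ((-3 : ℤ) : ℝ) by norm_num, Real.rpow_intCast]; norm_num]
  rw [Real.logb_rpow (by norm_num) (by norm_num)]
  norm_num

end Paper
end

section
/- Rank criterion for Slater determinant states: let N ≤ d. (i) For any antisymmetric density matrix ρ on (ℂ^d)^{⊗N}, the one-particle reduced state obtained by tracing out parties 2, …, N has rank at least N. (ii) A unit vector ψ in the antisymmetric subspace of (ℂ^d)^{⊗N} equals, up to a global phase, a Slater determinant state a_1 ∧ ⋯ ∧ a_N if and only if the one-particle reduced state of |ψ⟩⟨ψ| has rank exactly N. -/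
open scoped BigOperators ComplexOrder

namespace Paper

/-- ψ lies in the antisymmetric subspace of (ℂ^d)^{⊗N}: every permutation of the
tensor factors acts by its sign. -/
def IsAntisymmetricVec {d N : ℕ} (ψ : (Fin N → Fin d) → ℂ) : Prop :=
  ∀ σ : Equiv.Perm (Fin N), ∀ i, ψ (i ∘ σ) = ((Equiv.Perm.sign σ : ℤ) : ℂ) * ψ i

/-- The range of ρ is contained in the antisymmetric subspace. -/
def IsAntisymmetricState {d N : ℕ} (ρ : Matrix (Fin N → Fin d) (Fin N → Fin d) ℂ) : Prop :=
  ∀ v, IsAntisymmetricVec (ρ.mulVec v)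

/-- The Slater determinant vector
a_1 ∧ ⋯ ∧ a_N = (1/√N!) Σ_σ sgn(σ) a_{σ(1)} ⊗ ⋯ ⊗ a_{σ(N)}. -/
noncomputable def slater {d N : ℕ} (a : Fin N → Fin d → ℂ) : (Fin N → Fin d) → ℂ :=
  fun i => ((1 / Real.sqrt (Nat.factorial N) : ℝ) : ℂ) *
    ∑ σ : Equiv.Perm (Fin N), ((Equiv.Perm.sign σ : ℤ) : ℂ) * ∏ j, a (σ j) (i j)

/-- The family a_1, …, a_N is orthonormal. -/
def OrthonormalFam {d N : ℕ} (a : Fin N → Fin d → ℂ) : Prop :=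
  ∀ j k, (∑ x, starRingEnd ℂ (a j x) * a k x) = if j = k then 1 else 0

/-- The outer product |ψ⟩⟨ψ|. -/
def outer {n : Type*} (ψ : n → ℂ) : Matrix n n ℂ :=
  fun i i' => ψ i * starRingEnd ℂ (ψ i')

/-- The orthogonal projector P_{d,N} onto the antisymmetric subspace of (ℂ^d)^{⊗N}. -/
noncomputable def antisymProj (d N : ℕ) : Matrix (Fin N → Fin d) (Fin N → Fin d) ℂ := by
  classical
  exact fun i i' => ((1 / (Nat.factorial N) : ℝ) : ℂ) *
    ∑ σ : Equiv.Perm (Fin N), ((Equiv.Perm.sign σ : ℤ) : ℂ) * (if i' = i ∘ σ then 1 else 0)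
/-- One-particle reduced state: the partial trace over all tensor factors except the
first. -/
noncomputable def oneReduced {d N : ℕ} [NeZero N]
    (ρ : Matrix (Fin N → Fin d) (Fin N → Fin d) ℂ) : Matrix (Fin d) (Fin d) ℂ := by
  classical
  exact fun x y => ∑ g : Fin N → Fin d, if g 0 = x then ρ g (Function.update g 0 y) else 0

set_option linter.unusedSectionVars false


section Split
variable {d N : ℕ} [NeZero N]

/-- split a tuple into (value at 0, rest). -/
def splitE (d N : ℕ) [NeZero N] : (Fin N → Fin d) ≃ Fin d × ({j : Fin N // j ≠ 0} → Fin d) where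
  toFun g := (g 0, fun j => g j.1)
  invFun p := fun j => if h : j = (0 : Fin N) then p.1 else p.2 ⟨j, h⟩
  left_inv g := by funext j; by_cases h : j = (0 : Fin N) <;> simp [h]
  right_inv p := by
    obtain ⟨x, r⟩ := p
    refine Prod.ext (by simp) ?_
    funext j
    simp [j.2]

@[simp] lemma splitE_symm_zero (x : Fin d) (r : {j : Fin N // j ≠ 0} → Fin d) :
    (splitE d N).symm (x, r) 0 = x := by simp [splitE]

@[simp] lemma splitE_symm_ne (x : Fin d) (r : {j : Fin N // j ≠ 0} → Fin d)
    (j : {j : Fin N // j ≠ 0}) : (splitE d N).symm (x, r) j.1 = r j := by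
  simp [splitE, j.2]

lemma update_splitE_symm (x y : Fin d) (r : {j : Fin N // j ≠ 0} → Fin d) :
    Function.update ((splitE d N).symm (x, r)) 0 y = (splitE d N).symm (y, r) := by
  funext j
  by_cases h : j = (0 : Fin N)
  · subst h; simp
  · simp [Function.update_of_ne h, splitE, h]

lemma splitE_symm_update (g : Fin N → Fin d) (x : Fin d) :
    (splitE d N).symm (x, ((splitE d N) g).2) = Function.update g 0 x := by
  funext j
  by_cases h : j = (0 : Fin N)
  · subst h; simp
  · simp [Function.update_of_ne h, splitE, h]

lemma sum_split (f : (Fin N → Fin d) → ℂ) :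
    ∑ g : Fin N → Fin d, f g
      = ∑ x : Fin d, ∑ r : {j : Fin N // j ≠ 0} → Fin d, f ((splitE d N).symm (x, r)) := by
  rw [← Equiv.sum_comp (splitE d N).symm f, Fintype.sum_prod_type]

lemma oneReduced_apply (M : Matrix (Fin N → Fin d) (Fin N → Fin d) ℂ) (x y : Fin d) :
    oneReduced M x y
      = ∑ r : {j : Fin N // j ≠ 0} → Fin d,
          M ((splitE d N).symm (x, r)) ((splitE d N).symm (y, r)) := by
  classical
  have : oneReduced M x y
      = ∑ g : Fin N → Fin d, if g 0 = x then M g (Function.update g 0 y) else 0 := by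
    simp [oneReduced]
  rw [this, sum_split (f := fun g => if g 0 = x then M g (Function.update g 0 y) else 0)]
  rw [Finset.sum_eq_single x]
  · simp [update_splitE_symm]
  · intro b _ hb
    simp [hb]
  · simp

end Split
section SignFacts

lemma sign_ne_zero {N : ℕ} (σ : Equiv.Perm (Fin N)) : ((Equiv.Perm.sign σ : ℤ) : ℂ) ≠ 0 := by
  rcases Int.units_eq_one_or (Equiv.Perm.sign σ) with h | h <;> simp [h]

lemma sign_mul_self {N : ℕ} (σ : Equiv.Perm (Fin N)) :
    ((Equiv.Perm.sign σ : ℤ) : ℂ) * ((Equiv.Perm.sign σ : ℤ) : ℂ) = 1 := by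
  rcases Int.units_eq_one_or (Equiv.Perm.sign σ) with h | h <;> simp [h]

lemma antisym_zero_of_rep {d N : ℕ} {ψ : (Fin N → Fin d) → ℂ} (hA : IsAntisymmetricVec ψ)
    {g : Fin N → Fin d} {j k : Fin N} (hjk : j ≠ k) (hg : g j = g k) : ψ g = 0 := by
  have hcomp : g ∘ (Equiv.swap j k) = g := by
    funext l
    rcases eq_or_ne l j with rfl | hlj
    · simp [Function.comp, Equiv.swap_apply_left, hg]
    rcases eq_or_ne l k with rfl | hlk
    · simp [Function.comp, Equiv.swap_apply_right, hg]
    · simp [Function.comp, Equiv.swap_apply_of_ne_of_ne hlj hlk]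
  have := hA (Equiv.swap j k) g
  rw [hcomp, Equiv.Perm.sign_swap hjk] at this
  have h2 : ψ g = -ψ g := by simpa using this
  linear_combination h2 / 2

lemma antisym_inj {d N : ℕ} {ψ : (Fin N → Fin d) → ℂ} (hA : IsAntisymmetricVec ψ)
    {g : Fin N → Fin d} (hg : ψ g ≠ 0) : Function.Injective g := by
  intro j k h
  by_contra hjk
  exact hg (antisym_zero_of_rep hA hjk h)

end SignFacts

section WMat
open Matrix
variable {d N : ℕ} [NeZero N]

noncomputable def Wmat (ψ : (Fin N → Fin d) → ℂ) :
    Matrix ({j : Fin N // j ≠ 0} → Fin d) (Fin d) ℂ :=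
  fun r x => starRingEnd ℂ (ψ ((splitE d N).symm (x, r)))

lemma oneReduced_outer_eq (ψ : (Fin N → Fin d) → ℂ) :
    oneReduced (outer ψ) = (Wmat ψ)ᴴ * (Wmat ψ) := by
  ext x y
  rw [oneReduced_apply]
  simp only [Matrix.mul_apply, Matrix.conjTranspose_apply, Wmat, outer, RingHom.comp_apply,
    RCLike.star_def, starRingEnd_self_apply]

lemma oneReduced_outer_posSemidef (ψ : (Fin N → Fin d) → ℂ) :
    (oneReduced (outer ψ)).PosSemidef := by
  rw [oneReduced_outer_eq]
  exact Matrix.posSemidef_conjTranspose_mul_self _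

end WMat
section PureRank
open Matrix
variable {d N : ℕ} [NeZero N]

lemma w_mem_cols (ψ : (Fin N → Fin d) → ℂ) (h : Fin N → Fin d) :
    (fun x => ψ (Function.update h 0 x)) ∈ LinearMap.range ((Wmat ψ)ᴴ).mulVecLin := by
  classical
  refine ⟨Pi.single ((splitE d N) h).2 1, ?_⟩
  funext x
  simp only [mulVecLin_apply, mulVec, dotProduct, conjTranspose_apply, Wmat]
  rw [Finset.sum_eq_single (((splitE d N) h).2)]
  · simp [splitE_symm_update]
  · intro b _ hb; simp [Pi.single_apply, hb]
  · simp

lemma rank_oneReduced_outer_ge {ψ : (Fin N → Fin d) → ℂ}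
    (hA : IsAntisymmetricVec ψ) (hne : ψ ≠ 0) :
    N ≤ (oneReduced (outer ψ)).rank := by
  classical
  obtain ⟨g₀, hg₀⟩ := Function.ne_iff.mp hne
  set w : Fin N → (Fin d → ℂ) := fun k x => ψ (Function.update (g₀ ∘ Equiv.swap 0 k) 0 x) with hw
  have hdiag : ∀ k, w k (g₀ k) ≠ 0 := by
    intro k
    have h0 : (g₀ ∘ Equiv.swap 0 k) 0 = g₀ k := by simp [Function.comp]
    have hupd : Function.update (g₀ ∘ Equiv.swap 0 k) 0 (g₀ k) = g₀ ∘ Equiv.swap 0 k := by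
      conv_lhs => rw [← h0]
      exact Function.update_eq_self _ _
    have : w k (g₀ k) = ((Equiv.Perm.sign (Equiv.swap 0 k) : ℤ) : ℂ) * ψ g₀ := by
      rw [hw]; simp only []; rw [hupd]; exact hA (Equiv.swap 0 k) g₀
    rw [this]
    exact mul_ne_zero (sign_ne_zero _) (by simpa using hg₀)
  have hoff : ∀ k j, k ≠ j → w k (g₀ j) = 0 := by
    intro k j hkj
    set t := Function.update (g₀ ∘ Equiv.swap 0 k) 0 (g₀ j) with ht
    set p : Fin N := if j = 0 then k else j with hp
    have hp0 : p ≠ 0 := by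
      rcases eq_or_ne j 0 with rfl | hj
      · simp only [hp, if_pos rfl]; exact fun h => hkj h
      · simp [hp, hj]
    have hswap : Equiv.swap 0 k p = j := by
      rcases eq_or_ne j 0 with rfl | hj
      · simp only [hp, if_pos rfl]; exact Equiv.swap_apply_right 0 k
      · simp only [hp, if_neg hj]
        exact Equiv.swap_apply_of_ne_of_ne hj (Ne.symm hkj)
    have htp : t p = g₀ j := by
      rw [ht, Function.update_of_ne hp0]
      simp [Function.comp, hswap]
    have ht0 : t 0 = g₀ j := by simp [ht]
    exact antisym_zero_of_rep hA (Ne.symm hp0) (ht0.trans htp.symm)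
  have hli : LinearIndependent ℂ w := by
    rw [Fintype.linearIndependent_iff]
    intro c hc k
    have hck := congrFun hc (g₀ k)
    simp only [Finset.sum_apply, Pi.smul_apply, smul_eq_mul, Pi.zero_apply] at hck
    rw [Finset.sum_eq_single k] at hck
    · rcases mul_eq_zero.mp hck with h | h
      · exact h
      · exact absurd h (hdiag k)
    · intro b _ hbk; rw [hoff b k hbk, mul_zero]
    · simp
  have hsub : Set.range w ⊆ (LinearMap.range ((Wmat ψ)ᴴ).mulVecLin : Set _) := by
    rintro _ ⟨k, rfl⟩
    exact w_mem_cols ψ (g₀ ∘ Equiv.swap 0 k)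
  have hspan : Submodule.span ℂ (Set.range w) ≤ LinearMap.range ((Wmat ψ)ᴴ).mulVecLin :=
    Submodule.span_le.mpr hsub
  have h1 : N = Module.finrank ℂ (Submodule.span ℂ (Set.range w)) := by
    rw [finrank_span_eq_card hli, Fintype.card_fin]
  have h2 : Module.finrank ℂ (Submodule.span ℂ (Set.range w))
      ≤ Module.finrank ℂ (LinearMap.range ((Wmat ψ)ᴴ).mulVecLin) :=
    Submodule.finrank_mono hspan
  have h3 : ((Wmat ψ)ᴴ).rank = Module.finrank ℂ (LinearMap.range ((Wmat ψ)ᴴ).mulVecLin) := rfl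
  rw [oneReduced_outer_eq, Matrix.rank_conjTranspose_mul_self, ← Matrix.rank_conjTranspose]
  omega

end PureRank
section Slice
open Matrix
variable {d N : ℕ} [NeZero N]

noncomputable def sliceVec (u : Fin d → ℂ) (r : {j : Fin N // j ≠ 0} → Fin d) :
    (Fin N → Fin d) → ℂ :=
  fun g => if ((splitE d N) g).2 = r then u (g 0) else 0

lemma sliceVec_symm (u : Fin d → ℂ) (r r' : {j : Fin N // j ≠ 0} → Fin d) (x : Fin d) :
    sliceVec u r ((splitE d N).symm (x, r')) = if r' = r then u x else 0 := by
  simp [sliceVec]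

lemma quadform_oneReduced (M : Matrix (Fin N → Fin d) (Fin N → Fin d) ℂ) (u : Fin d → ℂ) :
    star u ⬝ᵥ (oneReduced M) *ᵥ u
      = ∑ r : {j : Fin N // j ≠ 0} → Fin d, star (sliceVec u r) ⬝ᵥ M *ᵥ (sliceVec u r) := by
  have hR : ∀ r : {j : Fin N // j ≠ 0} → Fin d,
      star (sliceVec u r) ⬝ᵥ M *ᵥ (sliceVec u r)
        = ∑ x, ∑ y, star (u x) *
            (M ((splitE d N).symm (x, r)) ((splitE d N).symm (y, r)) * u y) := by
    intro r
    simp only [dotProduct, mulVec, Pi.star_apply]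
    rw [sum_split (f := fun g => star (sliceVec u r g) * ∑ g', M g g' * sliceVec u r g')]
    refine Finset.sum_congr rfl fun x _ => ?_
    rw [Finset.sum_eq_single r]
    · rw [sum_split (f := fun g' => M ((splitE d N).symm (x, r)) g' * sliceVec u r g')]
      simp only [sliceVec_symm, if_pos rfl, Finset.mul_sum]
      refine Finset.sum_congr rfl fun y _ => ?_
      rw [Finset.sum_eq_single r]
      · simp
      · intro b _ hb; simp [sliceVec_symm, hb]
      · simp
    · intro b _ hb; simp [sliceVec_symm, hb]
    · simp
  rw [Finset.sum_congr rfl fun r _ => hR r]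
  have hrot : ∀ f : Fin d → Fin d → ({j : Fin N // j ≠ 0} → Fin d) → ℂ,
      ∑ x, ∑ y, ∑ r, f x y r = ∑ r, ∑ x, ∑ y, f x y r := by
    intro f
    calc ∑ x, ∑ y, ∑ r, f x y r = ∑ x, ∑ r, ∑ y, f x y r :=
          Finset.sum_congr rfl fun x _ => Finset.sum_comm
      _ = ∑ r, ∑ x, ∑ y, f x y r := Finset.sum_comm
  rw [← hrot]
  simp only [dotProduct, mulVec, oneReduced_apply, Pi.star_apply, Finset.mul_sum,
    Finset.sum_mul]
end Slice
section PartI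
open Matrix
variable {d N : ℕ} [NeZero N]

lemma outer_quadform (ψ w : (Fin N → Fin d) → ℂ) :
    star w ⬝ᵥ (outer ψ) *ᵥ w
      = (star w ⬝ᵥ ψ) * starRingEnd ℂ (star w ⬝ᵥ ψ) := by
  simp only [dotProduct, mulVec, outer, Pi.star_apply, map_sum, _root_.map_mul,
    Finset.sum_mul, Finset.mul_sum]
  rw [Finset.sum_comm]
  refine Finset.sum_congr rfl fun g _ => Finset.sum_congr rfl fun g' _ => ?_
  simp only [Complex.star_def, _root_.map_mul, Complex.conj_conj]
  ring

lemma part_one (ρ : Matrix (Fin N → Fin d) (Fin N → Fin d) ℂ)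
    (hρ : IsDensityMatrix ρ) (hAS : IsAntisymmetricState ρ) : N ≤ (oneReduced ρ).rank := by
  classical
  obtain ⟨hpsd, htr⟩ := hρ
  have hρne : ρ ≠ 0 := by
    intro h; rw [h] at htr; simp [Matrix.trace] at htr
  obtain ⟨i, j, hij⟩ : ∃ i j, ρ i j ≠ 0 := by
    by_contra h
    push_neg at h
    exact hρne (by ext i j; simp [h i j])
  set v : (Fin N → Fin d) → ℂ := Pi.single j (1:ℂ) with hv
  set ψ := ρ *ᵥ v with hψ
  have hψi : ψ i ≠ 0 := by
    simpa [hψ, hv, mulVec_single] using hij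
  have hψne : ψ ≠ 0 := fun h => hψi (by rw [h]; rfl)
  have hψA : IsAntisymmetricVec ψ := hAS v
  have hker : ∀ u, (oneReduced ρ) *ᵥ u = 0 → (oneReduced (outer ψ)) *ᵥ u = 0 := by
    intro u hu
    have hq : star u ⬝ᵥ (oneReduced ρ) *ᵥ u = 0 := by rw [hu, dotProduct_zero]
    rw [quadform_oneReduced] at hq
    have hterm : ∀ r, ρ *ᵥ (sliceVec u r) = 0 := by
      intro r
      have hnn : ∀ r' ∈ Finset.univ, (0:ℂ) ≤ star (sliceVec u r') ⬝ᵥ ρ *ᵥ (sliceVec u r') :=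
        fun r' _ => hpsd.dotProduct_mulVec_nonneg _
      have h0 := (Finset.sum_eq_zero_iff_of_nonneg hnn).mp hq r (Finset.mem_univ r)
      exact (hpsd.dotProduct_mulVec_zero_iff _).mp h0
    have hcontr : ∀ r, star (sliceVec u r) ⬝ᵥ ψ = 0 := by
      intro r
      have heq : star (sliceVec u r) ⬝ᵥ ψ = star (ρ *ᵥ (sliceVec u r)) ⬝ᵥ v := by
        rw [hψ, star_mulVec, hpsd.1.eq, dotProduct_mulVec]
      rw [heq, hterm r]
      simp
    have hq2 : star u ⬝ᵥ (oneReduced (outer ψ)) *ᵥ u = 0 := by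
      rw [quadform_oneReduced]
      refine Finset.sum_eq_zero fun r _ => ?_
      rw [outer_quadform, hcontr r]
      simp
    exact ((oneReduced_outer_posSemidef ψ).dotProduct_mulVec_zero_iff u).mp hq2
  have hkle : LinearMap.ker (oneReduced ρ).mulVecLin
      ≤ LinearMap.ker (oneReduced (outer ψ)).mulVecLin := by
    intro u hu
    rw [LinearMap.mem_ker, mulVecLin_apply] at hu ⊢
    exact hker u hu
  have h1 := LinearMap.finrank_range_add_finrank_ker (oneReduced ρ).mulVecLin
  have h2 := LinearMap.finrank_range_add_finrank_ker (oneReduced (outer ψ)).mulVecLin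
  have h3 : Module.finrank ℂ (LinearMap.ker (oneReduced ρ).mulVecLin)
      ≤ Module.finrank ℂ (LinearMap.ker (oneReduced (outer ψ)).mulVecLin) :=
    Submodule.finrank_mono hkle
  have e1 : (oneReduced ρ).rank
      = Module.finrank ℂ (LinearMap.range (oneReduced ρ).mulVecLin) := rfl
  have e2 : (oneReduced (outer ψ)).rank
      = Module.finrank ℂ (LinearMap.range (oneReduced (outer ψ)).mulVecLin) := rfl
  have h4 := rank_oneReduced_outer_ge hψA hψne
  omega

end PartI
section Slater
open Matrix
variable {d N : ℕ} [NeZero N]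

omit [NeZero N] in
lemma sum_rot3 {γ : Type*} [Fintype γ]
    (f : γ → Equiv.Perm (Fin N) → Equiv.Perm (Fin N) → ℂ) :
    ∑ x : γ, ∑ y : Equiv.Perm (Fin N), ∑ z : Equiv.Perm (Fin N), f x y z
      = ∑ y, ∑ z, ∑ x, f x y z := by
  calc ∑ x : γ, ∑ y, ∑ z, f x y z = ∑ y, ∑ x : γ, ∑ z, f x y z := Finset.sum_comm
    _ = ∑ y, ∑ z, ∑ x, f x y z := Finset.sum_congr rfl fun y _ => Finset.sum_comm

lemma prod_split_zero (f : Fin N → ℂ) :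
    ∏ j, f j = f 0 * ∏ j : {j : Fin N // j ≠ 0}, f j.1 := by
  classical
  rw [← Finset.prod_subtype (Finset.univ \ {(0 : Fin N)})
      (fun x => by simp [Finset.mem_sdiff]) f]
  exact Finset.prod_eq_mul_prod_sdiff_singleton_of_mem (Finset.mem_univ 0) f

omit [NeZero N] in
lemma sum_pi_prod_s11 {ι : Type*} [Fintype ι] [DecidableEq ι] (f : ι → Fin d → ℂ) :
    ∑ r : ι → Fin d, ∏ j, f j (r j) = ∏ j, ∑ z, f j z := by
  classical
  rw [Finset.prod_univ_sum]
  rw [Fintype.piFinset_univ]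

lemma perm_eq_of_agree_ne_zero {σ τ : Equiv.Perm (Fin N)}
    (h : ∀ j : {j : Fin N // j ≠ 0}, τ j.1 = σ j.1) : τ = σ := by
  have h0 : τ 0 = σ 0 := by
    by_contra h0
    have hj : τ⁻¹ (σ 0) ≠ 0 := by
      intro he
      apply h0
      have := congrArg τ he
      rw [Equiv.Perm.inv_def, Equiv.apply_symm_apply] at this
      exact this.symm
    have := h ⟨τ⁻¹ (σ 0), hj⟩
    simp only [Equiv.Perm.inv_def, Equiv.apply_symm_apply] at this
    have := σ.injective this.symm
    exact hj this
  ext j : 1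
  rcases eq_or_ne j 0 with rfl | hj
  · exact h0
  · exact h ⟨j, hj⟩

lemma sum_perm_zero {M : Type*} [AddCommMonoid M] (n : ℕ) (G : Fin (n+1) → M) :
    ∑ σ : Equiv.Perm (Fin (n+1)), G (σ 0) = n.factorial • ∑ k, G k := by
  rw [← Equiv.sum_comp Equiv.Perm.decomposeFin.symm (fun σ => G (σ 0)),
    Fintype.sum_prod_type]
  simp only [Equiv.Perm.decomposeFin_symm_apply_zero, Finset.sum_const,
    Finset.card_univ, Fintype.card_perm, Fintype.card_fin]
  rw [← Finset.sum_nsmul]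

end Slater
section SlaterRDM
open Matrix
variable {d N : ℕ} [NeZero N]

lemma slater_symm_apply (a : Fin N → Fin d → ℂ) (x : Fin d)
    (r : {j : Fin N // j ≠ 0} → Fin d) :
    slater a ((splitE d N).symm (x, r))
      = ((1 / Real.sqrt (Nat.factorial N) : ℝ) : ℂ) *
        ∑ σ : Equiv.Perm (Fin N), ((Equiv.Perm.sign σ : ℤ) : ℂ) *
          (a (σ 0) x * ∏ j : {j : Fin N // j ≠ 0}, a (σ j.1) (r j)) := by
  unfold slater
  congr 1
  refine Finset.sum_congr rfl fun σ _ => ?_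
  congr 1
  rw [prod_split_zero (f := fun j => a (σ j) ((splitE d N).symm (x, r) j))]
  simp

lemma key_orth {a : Fin N → Fin d → ℂ} (ha : OrthonormalFam a) (σ τ : Equiv.Perm (Fin N)) :
    ∑ r : {j : Fin N // j ≠ 0} → Fin d,
        ∏ j : {j : Fin N // j ≠ 0}, (a (σ j.1) (r j) * starRingEnd ℂ (a (τ j.1) (r j)))
      = if τ = σ then 1 else 0 := by
  classical
  rw [sum_pi_prod_s11 (f := fun (j : {j : Fin N // j ≠ 0}) z => a (σ j.1) z * starRingEnd ℂ (a (τ j.1) z))]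
  have h1 : ∀ j : {j : Fin N // j ≠ 0},
      ∑ z, a (σ j.1) z * starRingEnd ℂ (a (τ j.1) z) = if τ j.1 = σ j.1 then 1 else 0 := by
    intro j
    rw [← ha (τ j.1) (σ j.1)]
    exact Finset.sum_congr rfl fun z _ => mul_comm _ _
  rw [Finset.prod_congr rfl fun j _ => h1 j, Finset.prod_boole]
  congr 1
  simp only [eq_iff_iff]
  constructor
  · intro h; exact perm_eq_of_agree_ne_zero (fun j => h j (Finset.mem_univ _))
  · intro h j _; rw [h]

lemma oneReduced_outer_slater {a : Fin N → Fin d → ℂ} (ha : OrthonormalFam a) (x y : Fin d) :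
    oneReduced (outer (slater a)) x y
      = ((N : ℂ))⁻¹ * ∑ k, a k x * starRingEnd ℂ (a k y) := by
  classical
  obtain ⟨n, hn⟩ := Nat.exists_eq_succ_of_ne_zero (NeZero.ne N)
  subst hn
  set c : ℂ := ((1 / Real.sqrt (Nat.factorial (n+1)) : ℝ) : ℂ) with hc
  have hcc : c * starRingEnd ℂ c = (((n+1).factorial : ℂ))⁻¹ := by
    rw [hc, Complex.conj_ofReal, ← Complex.ofReal_mul]
    have : (1 / Real.sqrt ((n+1).factorial)) * (1 / Real.sqrt ((n+1).factorial))
        = ((n+1).factorial : ℝ)⁻¹ := by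
      rw [div_mul_div_comm, one_mul, Real.mul_self_sqrt (by positivity)]
      rw [one_div]
    rw [this]
    push_cast
    rfl
  have step1 : oneReduced (outer (slater a)) x y
      = ∑ r : {j : Fin (n+1) // j ≠ 0} → Fin d,
          slater a ((splitE d (n+1)).symm (x, r)) *
            starRingEnd ℂ (slater a ((splitE d (n+1)).symm (y, r))) := by
    rw [oneReduced_apply (M := outer (slater a))]
    rfl
  rw [step1]
  have step2 : ∀ r : {j : Fin (n+1) // j ≠ 0} → Fin d,
      slater a ((splitE d (n+1)).symm (x, r)) *
          starRingEnd ℂ (slater a ((splitE d (n+1)).symm (y, r)))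
        = ∑ σ : Equiv.Perm (Fin (n+1)), ∑ τ : Equiv.Perm (Fin (n+1)),
            ((c * starRingEnd ℂ c) * (((Equiv.Perm.sign σ : ℤ) : ℂ) * ((Equiv.Perm.sign τ : ℤ) : ℂ))) *
              ((a (σ 0) x * starRingEnd ℂ (a (τ 0) y)) *
                ∏ j : {j : Fin (n+1) // j ≠ 0},
                  (a (σ j.1) (r j) * starRingEnd ℂ (a (τ j.1) (r j)))) := by
    intro r
    rw [slater_symm_apply, slater_symm_apply, _root_.map_mul, map_sum, mul_mul_mul_comm,
      Finset.sum_mul_sum]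
    rw [Finset.mul_sum]
    refine Finset.sum_congr rfl fun σ _ => ?_
    rw [Finset.mul_sum]
    refine Finset.sum_congr rfl fun τ _ => ?_
    simp only [_root_.map_mul, map_intCast, map_prod]
    rw [Finset.prod_mul_distrib]
    ring
  rw [Finset.sum_congr rfl fun r _ => step2 r, sum_rot3]
  have step3 : ∀ σ τ : Equiv.Perm (Fin (n+1)),
      (∑ r : {j : Fin (n+1) // j ≠ 0} → Fin d,
        ((c * starRingEnd ℂ c) * (((Equiv.Perm.sign σ : ℤ) : ℂ) * ((Equiv.Perm.sign τ : ℤ) : ℂ))) *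
          ((a (σ 0) x * starRingEnd ℂ (a (τ 0) y)) *
            ∏ j : {j : Fin (n+1) // j ≠ 0}, (a (σ j.1) (r j) * starRingEnd ℂ (a (τ j.1) (r j)))))
      = ((c * starRingEnd ℂ c) * (((Equiv.Perm.sign σ : ℤ) : ℂ) * ((Equiv.Perm.sign τ : ℤ) : ℂ))) *
          ((a (σ 0) x * starRingEnd ℂ (a (τ 0) y)) * if τ = σ then 1 else 0) := by
    intro σ τ
    rw [← Finset.mul_sum, ← Finset.mul_sum, key_orth ha]
  rw [Finset.sum_congr rfl fun σ _ => Finset.sum_congr rfl fun τ _ => step3 σ τ]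
  have step4 : ∀ σ : Equiv.Perm (Fin (n+1)),
      (∑ τ : Equiv.Perm (Fin (n+1)),
        ((c * starRingEnd ℂ c) * (((Equiv.Perm.sign σ : ℤ) : ℂ) * ((Equiv.Perm.sign τ : ℤ) : ℂ))) *
          ((a (σ 0) x * starRingEnd ℂ (a (τ 0) y)) * if τ = σ then 1 else 0))
      = (((n+1).factorial : ℂ))⁻¹ * (a (σ 0) x * starRingEnd ℂ (a (σ 0) y)) := by
    intro σ
    rw [Finset.sum_eq_single σ]
    · rw [if_pos rfl, mul_one, hcc, sign_mul_self, mul_one]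
    · intro τ _ hτ; rw [if_neg hτ, mul_zero, mul_zero]
    · simp
  rw [Finset.sum_congr rfl fun σ _ => step4 σ, ← Finset.mul_sum,
    sum_perm_zero n (fun k => a k x * starRingEnd ℂ (a k y)), nsmul_eq_mul, ← mul_assoc]
  have h1 : (((n+1).factorial : ℂ))⁻¹ * ((n.factorial : ℕ) : ℂ) = ((n+1 : ℕ) : ℂ)⁻¹ := by
    have h2 : ((n+1 : ℕ) : ℂ) ≠ 0 := Nat.cast_ne_zero.mpr (Nat.succ_ne_zero n)
    have h3 : ((n.factorial : ℕ) : ℂ) ≠ 0 := Nat.cast_ne_zero.mpr (Nat.factorial_ne_zero n)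
    rw [Nat.factorial_succ]
    push_cast at h2 h3 ⊢
    field_simp
  rw [h1]

lemma slater_self_sum {a : Fin N → Fin d → ℂ} (ha : OrthonormalFam a) :
    ∑ i : Fin N → Fin d, slater a i * starRingEnd ℂ (slater a i) = 1 := by
  classical
  set c : ℂ := ((1 / Real.sqrt (Nat.factorial N) : ℝ) : ℂ) with hc
  have hcc : c * starRingEnd ℂ c = ((N.factorial : ℂ))⁻¹ := by
    rw [hc, Complex.conj_ofReal, ← Complex.ofReal_mul]
    have : (1 / Real.sqrt (N.factorial)) * (1 / Real.sqrt (N.factorial))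
        = (N.factorial : ℝ)⁻¹ := by
      rw [div_mul_div_comm, one_mul, Real.mul_self_sqrt (by positivity), one_div]
    rw [this]
    push_cast
    rfl
  have key2 : ∀ σ τ : Equiv.Perm (Fin N),
      ∑ i : Fin N → Fin d, ∏ j, (a (σ j) (i j) * starRingEnd ℂ (a (τ j) (i j)))
        = if τ = σ then 1 else 0 := by
    intro σ τ
    rw [sum_pi_prod_s11 (f := fun j z => a (σ j) z * starRingEnd ℂ (a (τ j) z))]
    have h1 : ∀ j, ∑ z, a (σ j) z * starRingEnd ℂ (a (τ j) z)
        = if τ j = σ j then 1 else 0 := by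
      intro j
      rw [← ha (τ j) (σ j)]
      exact Finset.sum_congr rfl fun z _ => mul_comm _ _
    rw [Finset.prod_congr rfl fun j _ => h1 j, Finset.prod_boole]
    congr 1
    simp only [eq_iff_iff]
    constructor
    · intro h; exact Equiv.ext fun j => h j (Finset.mem_univ j)
    · intro h j _; rw [h]
  have step2 : ∀ i : Fin N → Fin d,
      slater a i * starRingEnd ℂ (slater a i)
        = ∑ σ : Equiv.Perm (Fin N), ∑ τ : Equiv.Perm (Fin N),
            ((c * starRingEnd ℂ c) * (((Equiv.Perm.sign σ : ℤ) : ℂ) * ((Equiv.Perm.sign τ : ℤ) : ℂ))) *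
              ∏ j, (a (σ j) (i j) * starRingEnd ℂ (a (τ j) (i j))) := by
    intro i
    show (c * _) * starRingEnd ℂ (c * _) = _
    rw [_root_.map_mul, map_sum, mul_mul_mul_comm, Finset.sum_mul_sum]
    rw [Finset.mul_sum]
    refine Finset.sum_congr rfl fun σ _ => ?_
    rw [Finset.mul_sum]
    refine Finset.sum_congr rfl fun τ _ => ?_
    simp only [_root_.map_mul, map_intCast, map_prod]
    rw [Finset.prod_mul_distrib]
    ring
  rw [Finset.sum_congr rfl fun i _ => step2 i, sum_rot3]
  have step3 : ∀ σ τ : Equiv.Perm (Fin N),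
      (∑ i : Fin N → Fin d,
        ((c * starRingEnd ℂ c) * (((Equiv.Perm.sign σ : ℤ) : ℂ) * ((Equiv.Perm.sign τ : ℤ) : ℂ))) *
          ∏ j, (a (σ j) (i j) * starRingEnd ℂ (a (τ j) (i j))))
      = ((c * starRingEnd ℂ c) * (((Equiv.Perm.sign σ : ℤ) : ℂ) * ((Equiv.Perm.sign τ : ℤ) : ℂ))) *
          if τ = σ then 1 else 0 := by
    intro σ τ
    rw [← Finset.mul_sum, key2]
  rw [Finset.sum_congr rfl fun σ _ => Finset.sum_congr rfl fun τ _ => step3 σ τ]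
  have step4 : ∀ σ : Equiv.Perm (Fin N),
      (∑ τ : Equiv.Perm (Fin N),
        ((c * starRingEnd ℂ c) * (((Equiv.Perm.sign σ : ℤ) : ℂ) * ((Equiv.Perm.sign τ : ℤ) : ℂ))) *
          if τ = σ then 1 else 0)
      = ((N.factorial : ℂ))⁻¹ := by
    intro σ
    rw [Finset.sum_eq_single σ]
    · rw [if_pos rfl, mul_one, hcc, sign_mul_self, mul_one]
    · intro τ _ hτ; rw [if_neg hτ, mul_zero]
    · simp
  rw [Finset.sum_congr rfl fun σ _ => step4 σ, Finset.sum_const, Finset.card_univ,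
    Fintype.card_perm, Fintype.card_fin, nsmul_eq_mul]
  rw [mul_inv_cancel₀]
  exact_mod_cast Nat.cast_ne_zero.mpr (Nat.factorial_ne_zero N)

end SlaterRDM
section Forward
open Matrix
variable {d N : ℕ} [NeZero N]

omit [NeZero N] in
lemma outer_phase (θ : ℝ) (s : (Fin N → Fin d) → ℂ) :
    outer (fun i => Complex.exp ((θ:ℂ) * Complex.I) * s i) = outer s := by
  have h1 : Complex.exp ((θ:ℂ) * Complex.I) *
      starRingEnd ℂ (Complex.exp ((θ:ℂ) * Complex.I)) = 1 := by
    rw [Complex.mul_conj]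
    norm_cast
    rw [Complex.normSq_eq_norm_sq, Complex.norm_exp_ofReal_mul_I]
    norm_num
  funext i i'
  calc (Complex.exp ((θ:ℂ) * Complex.I) * s i) *
        starRingEnd ℂ (Complex.exp ((θ:ℂ) * Complex.I) * s i')
      = (Complex.exp ((θ:ℂ) * Complex.I) * starRingEnd ℂ (Complex.exp ((θ:ℂ) * Complex.I))) *
          (s i * starRingEnd ℂ (s i')) := by rw [_root_.map_mul]; ring
    _ = s i * starRingEnd ℂ (s i') := by rw [h1, one_mul]

lemma rank_smul_complex {m : Type*} [Fintype m] [DecidableEq m] {c : ℂ} (hc : c ≠ 0)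
    (M : Matrix m m ℂ) : (c • M).rank = M.rank := by
  have h : (c • M).mulVecLin = c • M.mulVecLin := by
    ext v i
    simp [Matrix.mulVecLin_apply, Matrix.smul_mulVec]
  have e1 : (c • M).rank = Module.finrank ℂ (LinearMap.range (c • M).mulVecLin) := rfl
  rw [e1, h, LinearMap.range_smul _ _ hc]
  rfl

lemma rank_slater {a : Fin N → Fin d → ℂ} (ha : OrthonormalFam a) :
    (oneReduced (outer (slater a))).rank = N := by
  classical
  set A : Matrix (Fin d) (Fin N) ℂ := Matrix.of (fun x k => a k x) with hA
  have hform : oneReduced (outer (slater a)) = ((N : ℂ))⁻¹ • (A * Aᴴ) := by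
    ext x y
    rw [oneReduced_outer_slater ha x y]
    simp only [Matrix.smul_apply, Matrix.mul_apply, Matrix.conjTranspose_apply, hA,
      Matrix.of_apply, smul_eq_mul, RCLike.star_def]
  have hAA : Aᴴ * A = (1 : Matrix (Fin N) (Fin N) ℂ) := by
    ext j k
    simp only [Matrix.mul_apply, Matrix.conjTranspose_apply, hA, Matrix.of_apply,
      Matrix.one_apply]
    exact ha j k
  have hNc : ((N:ℂ))⁻¹ ≠ 0 := inv_ne_zero (Nat.cast_ne_zero.mpr (NeZero.ne N))
  rw [hform, rank_smul_complex hNc, Matrix.rank_self_mul_conjTranspose,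
    ← Matrix.rank_conjTranspose_mul_self, hAA, Matrix.rank_one, Fintype.card_fin]

end Forward
section Backward
open Matrix
variable {d N : ℕ} [NeZero N]

omit [NeZero N] in
lemma sum_precomp (σ : Equiv.Perm (Fin N)) (f : (Fin N → Fin d) → ℂ) :
    ∑ g : Fin N → Fin d, f (g ∘ ⇑σ) = ∑ g, f g := by
  have hb : Function.Bijective (fun g : Fin N → Fin d => g ∘ ⇑σ) := by
    constructor
    · intro g1 g2 h
      funext j
      have := congrFun h (σ⁻¹ j)
      simpa using this
    · intro g
      refine ⟨g ∘ ⇑σ⁻¹, ?_⟩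
      funext j
      simp
  exact Fintype.sum_bijective _ hb _ _ (fun g => rfl)

lemma backward {ψ : (Fin N → Fin d) → ℂ} (hunit : IsUnitVec ψ)
    (hA : IsAntisymmetricVec ψ) (hrank : (oneReduced (outer ψ)).rank = N) :
    ∃ (θ : ℝ) (a : Fin N → Fin d → ℂ), OrthonormalFam a ∧
      ψ = fun i => Complex.exp ((θ : ℂ) * Complex.I) * slater a i := by
  classical
  have hpsd : (oneReduced (outer ψ)).PosSemidef := oneReduced_outer_posSemidef ψ
  have hherm : (oneReduced (outer ψ)).IsHermitian := hpsd.1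
  set B : Fin d → Fin d → ℂ := fun x i => (hherm.eigenvectorBasis i) x with hB
  have horth : ∀ i i', ∑ x, starRingEnd ℂ (B x i) * B x i' = if i = i' then 1 else 0 := by
    intro i i'
    have h1 := hherm.eigenvectorBasis.orthonormal
    rw [orthonormal_iff_ite] at h1
    have h2 := h1 i i'
    rw [PiLp.inner_apply] at h2
    simp only [RCLike.inner_apply] at h2
    rw [← h2]
    exact Finset.sum_congr rfl fun x _ => mul_comm _ _
  -- contraction of ψ with a null eigenvector vanishes
  have hzero : ∀ i, hherm.eigenvalues i = 0 →
      ∀ r, ∑ x, starRingEnd ℂ (B x i) * ψ ((splitE d N).symm (x, r)) = 0 := by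
    intro i hi r
    have hmv : (oneReduced (outer ψ)) *ᵥ (fun x => B x i) = 0 := by
      have h3 := hherm.mulVec_eigenvectorBasis i
      rw [hi, zero_smul] at h3
      exact h3
    have hq : star (fun x => B x i) ⬝ᵥ (oneReduced (outer ψ)) *ᵥ (fun x => B x i) = 0 := by
      rw [hmv, dotProduct_zero]
    rw [oneReduced_outer_eq] at hq
    have hq2 : star ((Wmat ψ) *ᵥ (fun x => B x i)) ⬝ᵥ ((Wmat ψ) *ᵥ (fun x => B x i)) = 0 := by
      rw [star_mulVec, ← dotProduct_mulVec, Matrix.mulVec_mulVec]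
      exact hq
    have hW0 : (Wmat ψ) *ᵥ (fun x => B x i) = 0 :=
      dotProduct_star_self_eq_zero.mp hq2
    have h4 := congrFun hW0 r
    have h5 := congrArg (starRingEnd ℂ) h4
    simp only [Matrix.mulVec, dotProduct, Wmat, map_sum, _root_.map_mul,
      Complex.conj_conj, Pi.zero_apply, map_zero] at h5
    rw [← h5]
    exact Finset.sum_congr rfl fun x _ => mul_comm _ _
  -- the tensor-power unitary
  set Tm : Matrix (Fin N → Fin d) (Fin N → Fin d) ℂ :=
    Matrix.of (fun g F => ∏ j, B (g j) (F j)) with hTm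
  have hT1 : Tmᴴ * Tm = 1 := by
    ext F F'
    simp only [Matrix.mul_apply, Matrix.conjTranspose_apply, hTm, Matrix.of_apply,
      Matrix.one_apply, RCLike.star_def]
    calc ∑ g : Fin N → Fin d, starRingEnd ℂ (∏ j, B (g j) (F j)) * ∏ j, B (g j) (F' j)
        = ∑ g : Fin N → Fin d, ∏ j, (starRingEnd ℂ (B (g j) (F j)) * B (g j) (F' j)) := by
          refine Finset.sum_congr rfl fun g _ => ?_
          rw [map_prod, ← Finset.prod_mul_distrib]
      _ = ∏ j, ∑ z, (starRingEnd ℂ (B z (F j)) * B z (F' j)) :=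
          sum_pi_prod_s11 (f := fun j z => starRingEnd ℂ (B z (F j)) * B z (F' j))
      _ = ∏ j, if F j = F' j then 1 else 0 :=
          Finset.prod_congr rfl fun j _ => horth (F j) (F' j)
      _ = if F = F' then 1 else 0 := by
          rw [Finset.prod_boole]
          congr 1
          simp [funext_iff]
  have hTT1 : Tm * Tmᴴ = 1 := mul_eq_one_comm.mp hT1
  set cf : (Fin N → Fin d) → ℂ := fun F => ∑ g, starRingEnd ℂ (Tm g F) * ψ g with hcf
  have hcfap : ∀ F, cf F = ∑ g, starRingEnd ℂ (Tm g F) * ψ g := fun F => by rw [hcf]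
  have hexp : ∀ g, ψ g = ∑ F, cf F * Tm g F := by
    intro g
    have h0 : (Tm * Tmᴴ) *ᵥ ψ = ψ := by rw [hTT1, Matrix.one_mulVec]
    have h1 := congrFun h0 g
    rw [← Matrix.mulVec_mulVec] at h1
    rw [← h1]
    simp only [Matrix.mulVec, dotProduct, Matrix.conjTranspose_apply, RCLike.star_def,
      Finset.mul_sum]
    refine Finset.sum_congr rfl fun F _ => ?_
    rw [hcfap F, Finset.sum_mul]
    exact Finset.sum_congr rfl fun g' _ => by ring
  -- antisymmetry of coefficients
  have hcperm : ∀ (F : Fin N → Fin d) (σ : Equiv.Perm (Fin N)),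
      cf (F ∘ ⇑σ) = ((Equiv.Perm.sign σ : ℤ) : ℂ) * cf F := by
    intro F σ
    have hTm' : ∀ g : Fin N → Fin d, Tm g (F ∘ ⇑σ) = Tm (g ∘ ⇑σ⁻¹) F := by
      intro g
      simp only [hTm, Matrix.of_apply]
      rw [← Equiv.prod_comp σ (fun j => B ((g ∘ ⇑σ⁻¹) j) (F j))]
      refine Finset.prod_congr rfl fun j _ => ?_
      simp [Function.comp]
    calc cf (F ∘ ⇑σ)
        = ∑ g : Fin N → Fin d, starRingEnd ℂ (Tm (g ∘ ⇑σ⁻¹) F) * ψ g := by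
          rw [hcfap]
          exact Finset.sum_congr rfl fun g _ => by rw [hTm' g]
      _ = ∑ g : Fin N → Fin d, starRingEnd ℂ (Tm ((g ∘ ⇑σ) ∘ ⇑σ⁻¹) F) * ψ (g ∘ ⇑σ) :=
          (sum_precomp σ (fun g => starRingEnd ℂ (Tm (g ∘ ⇑σ⁻¹) F) * ψ g)).symm
      _ = ∑ g : Fin N → Fin d, ((Equiv.Perm.sign σ : ℤ) : ℂ) * (starRingEnd ℂ (Tm g F) * ψ g) := by
          refine Finset.sum_congr rfl fun g _ => ?_
          have hgι : (g ∘ ⇑σ) ∘ ⇑σ⁻¹ = g := by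
            funext j
            simp [Function.comp]
          rw [hgι, hA σ g]
          ring
      _ = ((Equiv.Perm.sign σ : ℤ) : ℂ) * cf F := by
          rw [← Finset.mul_sum, hcfap]
  -- vanishing coefficients
  have hczero0 : ∀ F : Fin N → Fin d, hherm.eigenvalues (F 0) = 0 → cf F = 0 := by
    intro F hF
    rw [hcfap]
    rw [sum_split (f := fun g => starRingEnd ℂ (Tm g F) * ψ g)]
    rw [Finset.sum_comm]
    refine Finset.sum_eq_zero fun r _ => ?_
    have hsplit : ∀ x, Tm ((splitE d N).symm (x, r)) F
        = B x (F 0) * ∏ j : {j : Fin N // j ≠ 0}, B (r j) (F j.1) := by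
      intro x
      simp only [hTm, Matrix.of_apply]
      rw [prod_split_zero (f := fun j => B (((splitE d N).symm (x, r)) j) (F j))]
      simp
    calc ∑ x, starRingEnd ℂ (Tm ((splitE d N).symm (x, r)) F) * ψ ((splitE d N).symm (x, r))
        = (starRingEnd ℂ (∏ j : {j : Fin N // j ≠ 0}, B (r j) (F j.1))) *
            ∑ x, starRingEnd ℂ (B x (F 0)) * ψ ((splitE d N).symm (x, r)) := by
          rw [Finset.mul_sum]
          refine Finset.sum_congr rfl fun x _ => ?_
          rw [hsplit x, _root_.map_mul]
          ring
      _ = 0 := by rw [hzero (F 0) hF r, mul_zero]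
  have hczero : ∀ (F : Fin N → Fin d) (j₀ : Fin N), hherm.eigenvalues (F j₀) = 0 → cf F = 0 := by
    intro F j₀ hF
    have h1 := hcperm F (Equiv.swap 0 j₀)
    have h2 : cf (F ∘ ⇑(Equiv.swap 0 j₀)) = 0 := by
      apply hczero0
      simp only [Function.comp, Equiv.swap_apply_left]
      exact hF
    rw [h2] at h1
    rcases mul_eq_zero.mp h1.symm with h | h
    · exact absurd h (sign_ne_zero _)
    · exact h
  have hcnoninj : ∀ F : Fin N → Fin d, ¬ Function.Injective F → cf F = 0 := by
    intro F hF
    simp only [Function.Injective, not_forall] at hF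
    obtain ⟨j, k, hjk, hne⟩ := hF
    have hcomp : F ∘ ⇑(Equiv.swap j k) = F := by
      funext l
      rcases eq_or_ne l j with rfl | hlj
      · simp [Function.comp, Equiv.swap_apply_left, hjk]
      rcases eq_or_ne l k with rfl | hlk
      · simp [Function.comp, Equiv.swap_apply_right, hjk]
      · simp [Function.comp, Equiv.swap_apply_of_ne_of_ne hlj hlk]
    have h1 := hcperm F (Equiv.swap j k)
    rw [hcomp, Equiv.Perm.sign_swap hne] at h1
    have h2 : cf F = -cf F := by simpa using h1
    linear_combination h2 / 2
  -- the orthonormal family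
  have hcard : Fintype.card {i : Fin d // hherm.eigenvalues i ≠ 0} = N := by
    rw [← hherm.rank_eq_card_non_zero_eigs]
    exact hrank
  set e : Fin N ≃ {i : Fin d // hherm.eigenvalues i ≠ 0} :=
    (Fintype.equivFinOfCardEq hcard).symm with he
  set F₀ : Fin N → Fin d := fun k => (e k).1 with hF₀
  have hF₀inj : Function.Injective F₀ := fun j k h =>
    e.injective (Subtype.ext h)
  set a : Fin N → Fin d → ℂ := fun k x => B x (F₀ k) with ha
  have hONF : OrthonormalFam a := by
    intro j k
    rw [ha]
    simp only []
    rw [horth (F₀ j) (F₀ k)]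
    by_cases h : j = k
    · simp [h]
    · rw [if_neg (fun hc => h (hF₀inj hc)), if_neg h]
  -- support of cf
  set m : Equiv.Perm (Fin N) → (Fin N → Fin d) := fun τ => F₀ ∘ ⇑τ with hm
  have hminj : Function.Injective m := by
    intro τ1 τ2 h
    ext j : 1
    exact hF₀inj (congrFun h j)
  have hsupp : ∀ F : Fin N → Fin d, F ∉ Finset.univ.image m → cf F = 0 := by
    intro F hF
    by_contra hc
    apply hF
    have hall : ∀ j, hherm.eigenvalues (F j) ≠ 0 := by
      intro j hj
      exact hc (hczero F j hj)
    have hFinj : Function.Injective F := by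
      by_contra hni
      exact hc (hcnoninj F hni)
    set f : Fin N → Fin N := fun j => e.symm ⟨F j, hall j⟩ with hf
    have hfinj : Function.Injective f := by
      intro j k h
      rw [hf] at h
      have h2 := congrArg e h
      simp only [Equiv.apply_symm_apply] at h2
      exact hFinj (congrArg Subtype.val h2)
    have hfbij : Function.Bijective f := Finite.injective_iff_bijective.mp hfinj
    refine Finset.mem_image.mpr ⟨Equiv.ofBijective f hfbij, Finset.mem_univ _, ?_⟩
    funext j
    show F₀ (f j) = F j
    rw [hF₀, hf]
    simp only [Equiv.apply_symm_apply]
  -- main expansion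
  set cN : ℂ := ((1 / Real.sqrt (Nat.factorial N) : ℝ) : ℂ) with hcN
  have hcNne : cN ≠ 0 := by
    rw [hcN]
    simp only [ne_eq, Complex.ofReal_eq_zero, one_div, inv_eq_zero]
    positivity
  set k : ℂ := cf F₀ * cN⁻¹ with hk
  have hψeq : ψ = fun g => k * slater a g := by
    funext g
    have h1 : ψ g = ∑ F ∈ Finset.univ.image m, cf F * Tm g F := by
      rw [hexp g]
      exact (Finset.sum_subset (Finset.subset_univ _)
        (fun F _ hF => by rw [hsupp F hF, zero_mul])).symm
    rw [h1, Finset.sum_image (fun τ₁ _ τ₂ _ h => hminj h)]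
    have h2 : ∀ τ : Equiv.Perm (Fin N),
        cf (m τ) * Tm g (m τ)
          = cf F₀ * (((Equiv.Perm.sign τ : ℤ) : ℂ) * ∏ j, a (τ j) (g j)) := by
      intro τ
      rw [hm]
      simp only []
      rw [hcperm F₀ τ]
      have : Tm g (F₀ ∘ ⇑τ) = ∏ j, a (τ j) (g j) := by
        simp only [hTm, Matrix.of_apply, ha, Function.comp]
      rw [this]
      ring
    rw [Finset.sum_congr rfl fun τ _ => h2 τ, ← Finset.mul_sum]
    have h3 : slater a g = cN * ∑ τ : Equiv.Perm (Fin N),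
        ((Equiv.Perm.sign τ : ℤ) : ℂ) * ∏ j, a (τ j) (g j) := rfl
    rw [h3, hk]
    field_simp
  -- norm of k
  have hsnorm : ∑ i : Fin N → Fin d, (‖slater a i‖ ^ 2 : ℝ) = 1 := by
    have hss := slater_self_sum hONF
    have h1 : ∀ i : Fin N → Fin d, slater a i * starRingEnd ℂ (slater a i)
        = ((‖slater a i‖ ^ 2 : ℝ) : ℂ) := by
      intro i
      rw [Complex.mul_conj]
      norm_cast
      rw [Complex.normSq_eq_norm_sq]
    rw [Finset.sum_congr rfl fun i _ => h1 i, ← Complex.ofReal_sum] at hss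
    exact_mod_cast hss
  have hknorm : ‖k‖ = 1 := by
    have hu : ∑ x, ‖ψ x‖ ^ 2 = 1 := hunit
    have h2 : ∑ x, ‖ψ x‖^2 = ‖k‖^2 * ∑ i : Fin N → Fin d, ‖slater a i‖^2 := by
      rw [Finset.mul_sum]
      refine Finset.sum_congr rfl fun i _ => ?_
      rw [hψeq]
      simp [norm_mul, mul_pow]
    have h3 : (1:ℝ) = ‖k‖^2 := by rw [← hu, h2, hsnorm, mul_one]
    nlinarith [norm_nonneg k]
  refine ⟨k.arg, a, hONF, ?_⟩
  have hkexp : Complex.exp ((k.arg : ℂ) * Complex.I) = k := by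
    have h4 := Complex.norm_mul_exp_arg_mul_I k
    rw [hknorm] at h4
    simpa using h4
  rw [hψeq, hkexp]

end Backward

/-- **Rank criterion for Slater determinant states.** (i) The one-particle reduced state
of any antisymmetric density matrix on (ℂ^d)^{⊗N} has rank at least N. (ii) A unit
vector in the antisymmetric subspace is, up to a global phase, a Slater determinant
state iff its one-particle reduced state has rank exactly N. -/
theorem slater_rank_criterion {d N : ℕ} [NeZero N] (hNd : N ≤ d) :
    (∀ ρ : Matrix (Fin N → Fin d) (Fin N → Fin d) ℂ,
      IsDensityMatrix ρ → IsAntisymmetricState ρ → N ≤ (oneReduced ρ).rank) ∧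
    (∀ ψ : (Fin N → Fin d) → ℂ, IsUnitVec ψ → IsAntisymmetricVec ψ →
      ((∃ (θ : ℝ) (a : Fin N → Fin d → ℂ), OrthonormalFam a ∧
          ψ = fun i => Complex.exp ((θ : ℂ) * Complex.I) * slater a i) ↔
        (oneReduced (outer ψ)).rank = N)) := by
  refine ⟨fun ρ hρ hAS => part_one ρ hρ hAS, fun ψ hu hA => ⟨?_, ?_⟩⟩
  · rintro ⟨θ, a, hONF, rfl⟩
    rw [outer_phase θ (slater a)]
    exact rank_slater hONF
  · exact fun hr => backward hu hA hr

end Paper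
end

section
/- Geometric measure of the antisymmetric projector state (single copy): let 1 ≤ N ≤ d and let P_{d,N} be the orthogonal projector onto the antisymmetric subspace of (ℂ^d)^{⊗N}. Then the maximum of ⟨φ|P_{d,N}|φ⟩ over product vectors φ = a_1 ⊗ ⋯ ⊗ a_N equals 1/N!, and a product vector attains this maximum if and only if the vectors a_1, …, a_N are orthonormal. Consequently, for the antisymmetric projector state ρ_{d,N} = P_{d,N}/C(d,N) one has Λ²(ρ_{d,N}) = 1/(N!·C(d,N)) and G(ρ_{d,N}) = log₂( d!/(d−N)! ). -/
open scoped BigOperators ComplexOrder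

namespace Paper

/-- The antisymmetric projector state ρ_{d,N} = P_{d,N} / C(d,N). -/
noncomputable def antisymState (d N : ℕ) : Matrix (Fin N → Fin d) (Fin N → Fin d) ℂ :=
  (((Nat.choose d N : ℝ)⁻¹ : ℝ) : ℂ) • antisymProj d N

/-! ### Auxiliary lemmas -/

open Matrix in
/-- The Gram matrix of a family of vectors. -/
noncomputable def gramMat {d N : ℕ} (a : Fin N → Fin d → ℂ) : Matrix (Fin N) (Fin N) ℂ :=
  (Matrix.of fun (x : Fin d) (j : Fin N) => a j x)ᴴ * (Matrix.of fun x j => a j x)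

lemma gramMat_apply {d N : ℕ} (a : Fin N → Fin d → ℂ) (j k : Fin N) :
    gramMat a j k = ∑ x, starRingEnd ℂ (a j x) * a k x := by
  simp [gramMat, Matrix.mul_apply, Matrix.conjTranspose_apply]

lemma gramMat_posSemidef {d N : ℕ} (a : Fin N → Fin d → ℂ) : (gramMat a).PosSemidef :=
  Matrix.posSemidef_conjTranspose_mul_self _

lemma gramMat_diag {d N : ℕ} {a : Fin N → Fin d → ℂ} (h : ∀ j, IsUnitVec (a j)) (j : Fin N) :
    gramMat a j j = 1 := by
  rw [gramMat_apply]
  have : ∀ x, starRingEnd ℂ (a j x) * a j x = ((‖a j x‖ ^ 2 : ℝ) : ℂ) := by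
    intro x
    rw [mul_comm, Complex.mul_conj']
    push_cast [Complex.sq_norm]
    rw [Complex.normSq_eq_norm_sq, Complex.ofReal_pow]
  simp only [this]
  rw [← Complex.ofReal_sum]
  norm_cast
  exact h j

lemma antisymProj_mulVec {d N : ℕ} (φ : (Fin N → Fin d) → ℂ) (i : Fin N → Fin d) :
    (antisymProj d N).mulVec φ i = ((1 / (Nat.factorial N) : ℝ) : ℂ) *
      ∑ σ : Equiv.Perm (Fin N), ((Equiv.Perm.sign σ : ℤ) : ℂ) * φ (i ∘ σ) := by
  classical
  simp only [Matrix.mulVec, dotProduct, antisymProj]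
  have step1 : (∑ i' : Fin N → Fin d,
      (((1 / (Nat.factorial N) : ℝ) : ℂ) * ∑ σ : Equiv.Perm (Fin N),
        ((Equiv.Perm.sign σ : ℤ) : ℂ) * (if i' = i ∘ σ then 1 else 0)) * φ i')
      = ∑ i' : Fin N → Fin d, ∑ σ : Equiv.Perm (Fin N),
        ((1 / (Nat.factorial N) : ℝ) : ℂ) * (((Equiv.Perm.sign σ : ℤ) : ℂ) *
          (if i' = i ∘ σ then φ i' else 0)) := by
    refine Finset.sum_congr rfl fun i' _ => ?_
    rw [Finset.mul_sum, Finset.sum_mul]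
    refine Finset.sum_congr rfl fun σ _ => ?_
    by_cases h : i' = i ∘ σ <;> simp [h] <;> ring
  rw [step1, Finset.sum_comm, Finset.mul_sum]
  refine Finset.sum_congr rfl fun σ _ => ?_
  rw [← Finset.mul_sum, ← Finset.mul_sum]
  congr 1
  congr 1
  simp

lemma overlap_antisymProj {d N : ℕ} (a : Fin N → Fin d → ℂ) :
    overlap (antisymProj d N) (prodVec a) = ((gramMat a).det).re / (Nat.factorial N : ℝ) := by
  classical
  have hinner : ∀ σ : Equiv.Perm (Fin N),
      (∑ i : Fin N → Fin d, starRingEnd ℂ (prodVec a i) * prodVec a (i ∘ σ))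
        = ∏ j, gramMat a j (σ⁻¹ j) := by
    intro σ
    have h1 : ∀ i : Fin N → Fin d,
        starRingEnd ℂ (prodVec a i) * prodVec a (i ∘ σ)
          = ∏ j, (starRingEnd ℂ (a j (i j)) * a (σ⁻¹ j) (i j)) := by
      intro i
      have h2 : prodVec a (i ∘ σ) = ∏ j, a (σ⁻¹ j) (i j) := by
        have := Equiv.prod_comp σ (fun k => a (σ⁻¹ k) (i k))
        simp only [← Equiv.Perm.mul_apply, inv_mul_cancel, Equiv.Perm.one_apply] at this
        rw [← this]
        rfl
      rw [h2, prodVec, map_prod, ← Finset.prod_mul_distrib]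
    simp only [h1]
    rw [← Fintype.piFinset_univ, ← Finset.prod_univ_sum
      (fun _ : Fin N => (Finset.univ : Finset (Fin d)))
      (fun j x => starRingEnd ℂ (a j x) * a (σ⁻¹ j) x)]
    exact Finset.prod_congr rfl fun j _ => (gramMat_apply a j (σ⁻¹ j)).symm
  have hdet : ∑ σ : Equiv.Perm (Fin N), ((Equiv.Perm.sign σ : ℤ) : ℂ) *
      ∏ j, gramMat a j (σ⁻¹ j) = (gramMat a).det := by
    rw [← Matrix.det_transpose, Matrix.det_apply']
    refine Fintype.sum_equiv (Equiv.inv (Equiv.Perm (Fin N))) _ _ fun σ => ?_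
    simp [Equiv.Perm.sign_inv]
  have hdot : dotProduct (star (prodVec a)) ((antisymProj d N).mulVec (prodVec a))
      = ((1 / (Nat.factorial N) : ℝ) : ℂ) * (gramMat a).det := by
    simp only [dotProduct, antisymProj_mulVec, Pi.star_apply]
    have expand : ∀ i : Fin N → Fin d, star (prodVec a i) *
        (((1 / (Nat.factorial N) : ℝ) : ℂ) * ∑ σ : Equiv.Perm (Fin N),
          ((Equiv.Perm.sign σ : ℤ) : ℂ) * prodVec a (i ∘ σ))
        = ∑ σ : Equiv.Perm (Fin N), ((1 / (Nat.factorial N) : ℝ) : ℂ) *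
          (((Equiv.Perm.sign σ : ℤ) : ℂ) * (starRingEnd ℂ (prodVec a i) * prodVec a (i ∘ σ))) := by
      intro i
      rw [Finset.mul_sum, Finset.mul_sum]
      refine Finset.sum_congr rfl fun σ _ => ?_
      simp only [Complex.star_def]
      ring
    simp only [expand]
    rw [Finset.sum_comm, ← hdet, Finset.mul_sum]
    refine Finset.sum_congr rfl fun σ _ => ?_
    rw [← Finset.mul_sum, ← Finset.mul_sum, hinner σ]
  rw [overlap, hdot, Complex.re_ofReal_mul]
  ring

lemma gramMat_trace {d N : ℕ} {a : Fin N → Fin d → ℂ} (h : ∀ j, IsUnitVec (a j)) :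
    (gramMat a).trace = (N : ℂ) := by
  rw [Matrix.trace]
  simp [Matrix.diag, gramMat_diag h]

/-- Sum of eigenvalues equals trace for a Hermitian complex matrix. -/
lemma sum_eigenvalues_eq_trace {n : Type*} [Fintype n] [DecidableEq n]
    {A : Matrix n n ℂ} (hA : A.IsHermitian) :
    ((∑ i, hA.eigenvalues i : ℝ) : ℂ) = A.trace := by
  simpa using hA.trace_eq_sum_eigenvalues.symm

lemma prod_le_one_of_sum_eq {N : ℕ} (lam : Fin N → ℝ) (h0 : ∀ i, 0 ≤ lam i)
    (hs : ∑ i, lam i = N) : ∏ i, lam i ≤ 1 := by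
  by_cases hz : ∃ i, lam i = 0
  · obtain ⟨i, hi⟩ := hz
    rw [Finset.prod_eq_zero (Finset.mem_univ i) hi]
    norm_num
  · push_neg at hz
    have hpos : ∀ i, 0 < lam i := fun i => lt_of_le_of_ne (h0 i) (Ne.symm (hz i))
    have h1 : ∏ i, lam i = Real.exp (∑ i, Real.log (lam i)) := by
      rw [Real.exp_sum]
      exact Finset.prod_congr rfl fun i _ => (Real.exp_log (hpos i)).symm
    have h2 : ∑ i, Real.log (lam i) ≤ 0 := by
      calc ∑ i, Real.log (lam i) ≤ ∑ i, (lam i - 1) :=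
            Finset.sum_le_sum fun i _ => Real.log_le_sub_one_of_pos (hpos i)
        _ = 0 := by simp [Finset.sum_sub_distrib, hs]
    rw [h1]
    calc Real.exp (∑ i, Real.log (lam i)) ≤ Real.exp 0 := Real.exp_le_exp.mpr h2
      _ = 1 := Real.exp_zero

lemma eq_one_of_prod_eq_one {N : ℕ} (lam : Fin N → ℝ) (h0 : ∀ i, 0 ≤ lam i)
    (hs : ∑ i, lam i = N) (hp : ∏ i, lam i = 1) : ∀ i, lam i = 1 := by
  have hpos : ∀ i, 0 < lam i := by
    intro i
    rcases (h0 i).lt_or_eq with h | h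
    · exact h
    · exfalso
      rw [Finset.prod_eq_zero (Finset.mem_univ i) h.symm] at hp
      norm_num at hp
  have hlog : ∑ i, Real.log (lam i) = 0 := by
    rw [← Real.log_prod (fun i _ => (hpos i).ne'), hp, Real.log_one]
  have hsub : ∑ i, (lam i - 1 - Real.log (lam i)) = 0 := by
    simp [Finset.sum_sub_distrib, hs, hlog]
  have hnn : ∀ i ∈ Finset.univ, 0 ≤ lam i - 1 - Real.log (lam i) := fun i _ => by
    have := Real.log_le_sub_one_of_pos (hpos i); linarith
  have heach := (Finset.sum_eq_zero_iff_of_nonneg hnn).mp hsub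
  intro i
  by_contra hne
  have := Real.log_lt_sub_one_of_pos (hpos i) hne
  have := heach i (Finset.mem_univ i)
  linarith

lemma eq_one_of_eigenvalues_one {n : Type*} [Fintype n] [DecidableEq n]
    {A : Matrix n n ℂ} (hA : A.IsHermitian) (h : ∀ i, hA.eigenvalues i = 1) : A = 1 := by
  have hd : Matrix.diagonal (RCLike.ofReal ∘ hA.eigenvalues) = (1 : Matrix n n ℂ) := by
    rw [show RCLike.ofReal ∘ hA.eigenvalues = fun _ => (1 : ℂ) by funext i; simp [h i]]
    exact Matrix.diagonal_one
  conv_lhs => rw [hA.spectral_theorem]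
  rw [hd, map_one]

/-- **Geometric measure of the antisymmetric projector state (single copy).**
For 1 ≤ N ≤ d, the maximum of ⟨φ|P_{d,N}|φ⟩ over product vectors equals 1/N!, attained
exactly at tensor products of orthonormal single-particle vectors; consequently
Λ²(ρ_{d,N}) = 1/(N!·C(d,N)) and G(ρ_{d,N}) = log₂( d!/(d−N)! ). -/
theorem gm_antisymState_one_copy {d N : ℕ} (hN : 1 ≤ N) (hNd : N ≤ d) :
    IsGreatest {r : ℝ | ∃ a : Fin N → Fin d → ℂ, (∀ j, IsUnitVec (a j)) ∧
        r = overlap (antisymProj d N) (prodVec a)} ((Nat.factorial N : ℝ)⁻¹) ∧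
    (∀ a : Fin N → Fin d → ℂ, (∀ j, IsUnitVec (a j)) →
      (overlap (antisymProj d N) (prodVec a) = (Nat.factorial N : ℝ)⁻¹ ↔ OrthonormalFam a)) ∧
    maxOverlap (antisymState d N) = ((Nat.factorial N : ℝ) * (Nat.choose d N : ℝ))⁻¹ ∧
    gm (antisymState d N) = Real.logb 2 ((Nat.factorial d : ℝ) / (Nat.factorial (d - N) : ℝ)) := by
  classical
  have hfacpos : (0 : ℝ) < (Nat.factorial N : ℝ) := by
    exact_mod_cast N.factorial_pos
  have key : ∀ a : Fin N → Fin d → ℂ, (∀ j, IsUnitVec (a j)) →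
      overlap (antisymProj d N) (prodVec a) ≤ (Nat.factorial N : ℝ)⁻¹ ∧
      (overlap (antisymProj d N) (prodVec a) = (Nat.factorial N : ℝ)⁻¹ ↔ OrthonormalFam a) := by
    intro a ha
    have hpsd := gramMat_posSemidef a
    have hherm := hpsd.1
    set lam := hherm.eigenvalues with hlam
    have h0 : ∀ i, 0 ≤ lam i := hpsd.eigenvalues_nonneg
    have htr : (gramMat a).trace = (N : ℂ) := gramMat_trace ha
    have hs : ∑ i, lam i = N := by
      have h1 := sum_eigenvalues_eq_trace hherm
      rw [htr] at h1
      exact_mod_cast h1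
    have hdet : (gramMat a).det = ((∏ i, lam i : ℝ) : ℂ) := by
      rw [hherm.det_eq_prod_eigenvalues]
      push_cast
      rfl
    have hov : overlap (antisymProj d N) (prodVec a)
        = (∏ i, lam i) / (Nat.factorial N : ℝ) := by
      rw [overlap_antisymProj, hdet, Complex.ofReal_re]
    have hle : overlap (antisymProj d N) (prodVec a) ≤ (Nat.factorial N : ℝ)⁻¹ := by
      rw [hov, div_le_iff₀ hfacpos, inv_mul_cancel₀ hfacpos.ne']
      exact prod_le_one_of_sum_eq lam h0 hs
    refine ⟨hle, ?_, ?_⟩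
    · intro heq
      rw [hov, div_eq_iff hfacpos.ne', inv_mul_cancel₀ hfacpos.ne'] at heq
      have hone := eq_one_of_prod_eq_one lam h0 hs heq
      have hG1 : gramMat a = 1 := eq_one_of_eigenvalues_one hherm hone
      intro j k
      have h2 : gramMat a j k = (1 : Matrix (Fin N) (Fin N) ℂ) j k := by rw [hG1]
      simpa [gramMat_apply, Matrix.one_apply] using h2
    · intro horth
      have hG1 : gramMat a = 1 := by
        ext j k
        rw [gramMat_apply, horth j k, Matrix.one_apply]
      have hprod : ∏ i, lam i = 1 := by
        have hd1 : (gramMat a).det = 1 := by rw [hG1, Matrix.det_one]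
        rw [hdet] at hd1
        exact_mod_cast hd1
      rw [hov, hprod, one_div]
  set a₀ : Fin N → Fin d → ℂ := fun j x => if x = Fin.castLE hNd j then 1 else 0 with ha₀
  have ha₀unit : ∀ j, IsUnitVec (a₀ j) := by
    intro j
    simp [IsUnitVec, ha₀, apply_ite (fun z : ℂ => ‖z‖ ^ 2), Finset.sum_ite_eq']
  have ha₀orth : OrthonormalFam a₀ := by
    intro j k
    by_cases h : j = k
    · subst h
      simp [ha₀, apply_ite (starRingEnd ℂ), ite_mul, Finset.sum_ite_eq']
    · have hne : Fin.castLE hNd j ≠ Fin.castLE hNd k := by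
        simpa [Fin.castLE_inj] using h
      simp [ha₀, apply_ite (starRingEnd ℂ), ite_mul, mul_ite, Finset.sum_ite_eq', hne, h, Ne.symm h]
  have hmax : overlap (antisymProj d N) (prodVec a₀) = (Nat.factorial N : ℝ)⁻¹ :=
    ((key a₀ ha₀unit).2).mpr ha₀orth
  have hgreat1 : IsGreatest {r : ℝ | ∃ a : Fin N → Fin d → ℂ, (∀ j, IsUnitVec (a j)) ∧
      r = overlap (antisymProj d N) (prodVec a)} ((Nat.factorial N : ℝ)⁻¹) := by
    constructor
    · exact ⟨a₀, ha₀unit, hmax.symm⟩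
    · rintro r ⟨a, ha, rfl⟩
      exact (key a ha).1
  have hCpos : (0 : ℝ) < (Nat.choose d N : ℝ) := by
    exact_mod_cast Nat.choose_pos hNd
  have hstate : ∀ φ : (Fin N → Fin d) → ℂ, overlap (antisymState d N) φ
      = ((Nat.choose d N : ℝ))⁻¹ * overlap (antisymProj d N) φ := by
    intro φ
    rw [overlap, overlap, antisymState, Matrix.smul_mulVec, dotProduct_smul,
      smul_eq_mul, Complex.re_ofReal_mul]
  have hv : ((Nat.factorial N : ℝ) * (Nat.choose d N : ℝ))⁻¹
      = (Nat.choose d N : ℝ)⁻¹ * (Nat.factorial N : ℝ)⁻¹ := by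
    rw [mul_inv]
    ring
  have hgreat2 : IsGreatest {r : ℝ | ∃ a : Fin N → Fin d → ℂ, (∀ j, IsUnitVec (a j)) ∧
      r = overlap (antisymState d N) (prodVec a)}
      (((Nat.factorial N : ℝ) * (Nat.choose d N : ℝ))⁻¹) := by
    constructor
    · exact ⟨a₀, ha₀unit, by rw [hstate, hmax, hv]⟩
    · rintro r ⟨a, ha, rfl⟩
      rw [hstate, hv]
      exact mul_le_mul_of_nonneg_left (key a ha).1 (inv_nonneg.mpr hCpos.le)
  have hmo : maxOverlap (antisymState d N)
      = ((Nat.factorial N : ℝ) * (Nat.choose d N : ℝ))⁻¹ := hgreat2.csSup_eq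
  refine ⟨hgreat1, fun a ha => (key a ha).2, hmo, ?_⟩
  rw [gm, hmo, Real.logb_inv, neg_neg]
  congr 1
  have h' : (Nat.choose d N : ℝ) * (Nat.factorial N : ℝ) * (Nat.factorial (d - N) : ℝ)
      = (Nat.factorial d : ℝ) := by
    exact_mod_cast congrArg (Nat.cast : ℕ → ℝ) (Nat.choose_mul_factorial_mul_factorial hNd)
  have hdn : (0 : ℝ) < (Nat.factorial (d - N) : ℝ) := by
    exact_mod_cast (d - N).factorial_pos
  rw [eq_div_iff hdn.ne']
  linear_combination h'

end Paper
end
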